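/- arXiv:math/0003147 — 6 statements merged into one kernel-verified Lean document; each statement's English description precedes it below -/
import Mathlib

section
/- Let A = k[u_1,…,u_n, v_1^2,…,v_n^2] ⊆ C = k[u_1,…,u_n,v_1,…,v_n] over k = ℤ/2, and let s be the derivation with s(u_i)=0, s(v_i)=u_i. Then ker(s) = im(s) + A as A-submodules of C. -/
/-!
`C` is the tensor product of the pieces `k[uᵢ, vᵢ]`, and on each piece `uᵢ ∂/∂vᵢ` has the
contracting homotopy `hᵢ : uᵢ^a vᵢ^b ↦ uᵢ^(a-1) vᵢ^(b+1)` (for `a ≥ 1` and `b` even, zero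
otherwise), with `s hᵢ + hᵢ s = 1 - pᵢ` for `pᵢ` the projection onto `k[vᵢ²]`. The tensor product
homotopy `h = h₁ + p₁ h₂ + p₁ p₂ h₃ + ⋯` acts on a monomial at the first index `i` whose factor
`uᵢ^a vᵢ^b` is not in `k[vᵢ²]`, and satisfies `s h + h s + p = 1` with `p = p₁ ⋯ pₙ` the projection
onto `k[v₁², …, vₙ²] ⊆ A` (no signs, since `2 = 0`). So a cycle `c` equals `s (h c) + p c`.
Conversely `s² = 0` and `s` kills `A`, again because `2 = 0`.
-/

open MvPolynomial

/-- The derivation `s = Σ uᵢ ∂/∂vᵢ` on `C = (ℤ/2)[u₁,…,uₙ,v₁,…,vₙ]`,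
determined by `s(uᵢ) = 0` and `s(vᵢ) = uᵢ`.  Here the variable `Sum.inl i`
is `uᵢ` and `Sum.inr i` is `vᵢ`. -/
noncomputable def sDer (n : ℕ) :
    Derivation (ZMod 2) (MvPolynomial (Fin n ⊕ Fin n) (ZMod 2))
      (MvPolynomial (Fin n ⊕ Fin n) (ZMod 2)) :=
  MvPolynomial.mkDerivation (ZMod 2)
    (Sum.elim (fun _ => 0) (fun i => X (Sum.inl i)))

/-- The subring `A = k[u₁,…,uₙ,v₁²,…,vₙ²]` of `C`. -/
noncomputable def Asub (n : ℕ) : Subalgebra (ZMod 2) (MvPolynomial (Fin n ⊕ Fin n) (ZMod 2)) :=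
  Algebra.adjoin (ZMod 2)
    (Set.range (fun i : Fin n => X (Sum.inl i)) ∪
      Set.range (fun i : Fin n => (X (Sum.inr i) : MvPolynomial (Fin n ⊕ Fin n) (ZMod 2)) ^ 2))

open Finsupp

theorem Derivation.apply_apply_eq_zero_of_charTwo {R σ : Type*} [CommRing R] [CharP R 2]
    (D : Derivation R (MvPolynomial σ R) (MvPolynomial σ R)) (hD : ∀ i, D (D (X i)) = 0)
    (p : MvPolynomial σ R) : D (D p) = 0 := by
  induction p using MvPolynomial.induction_on with
  | C a => simp [← algebraMap_eq]
  | add p q hp hq => simp [hp, hq]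
  | mul_X p i hp =>
    simp only [Derivation.leibniz, map_add, smul_eq_mul, hp, hD, mul_zero, zero_add]
    linear_combination CharTwo.add_self_eq_zero (D p * D (X i))

theorem Derivation.map_sq_eq_zero_of_charTwo {R A : Type*} [CommRing R] [CommRing A]
    [Algebra R A] [CharP A 2] (D : Derivation R A A) (a : A) : D (a ^ 2) = 0 := by
  rw [pow_two, D.leibniz, smul_eq_mul, CharTwo.add_self_eq_zero]

section

variable {n : ℕ}

theorem sDer_X_inl (i : Fin n) : sDer n (X (Sum.inl i)) = 0 := mkDerivation_X _ _ _

theorem sDer_X_inr (i : Fin n) : sDer n (X (Sum.inr i)) = X (Sum.inl i) := mkDerivation_X _ _ _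

theorem sDer_sDer (c : MvPolynomial (Fin n ⊕ Fin n) (ZMod 2)) : sDer n (sDer n c) = 0 :=
  (sDer n).apply_apply_eq_zero_of_charTwo
    (by rintro (i | i) <;> simp [sDer_X_inl, sDer_X_inr]) c

theorem sDer_eq_zero_of_mem_Asub {a : MvPolynomial (Fin n ⊕ Fin n) (ZMod 2)} (ha : a ∈ Asub n) :
    sDer n a = 0 := by
  have : Set.EqOn (sDer n) 0 (Set.range (fun i => X (Sum.inl i)) ∪
      Set.range (fun i => (X (Sum.inr i) : MvPolynomial (Fin n ⊕ Fin n) (ZMod 2)) ^ 2)) := by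
    rintro _ (⟨i, rfl⟩ | ⟨i, rfl⟩)
    · exact sDer_X_inl i
    · exact (sDer n).map_sq_eq_zero_of_charTwo _
  exact Derivation.eqOn_adjoin (D2 := 0) this ha

end

namespace sDer

variable {n : ℕ}

noncomputable section

abbrev Exponent (n : ℕ) := Fin n ⊕ Fin n →₀ ℕ

def uToV (i : Fin n) (d : Exponent n) : Exponent n :=
  d - single (Sum.inl i) 1 + single (Sum.inr i) 1

def vToU (i : Fin n) (d : Exponent n) : Exponent n :=
  d - single (Sum.inr i) 1 + single (Sum.inl i) 1

@[simp] theorem uToV_inl (i j : Fin n) (d : Exponent n) :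
    uToV i d (Sum.inl j) = d (Sum.inl j) - if i = j then 1 else 0 := by
  simp [uToV, single_apply]

@[simp] theorem uToV_inr (i j : Fin n) (d : Exponent n) :
    uToV i d (Sum.inr j) = d (Sum.inr j) + if i = j then 1 else 0 := by
  simp [uToV, single_apply]

@[simp] theorem vToU_inl (i j : Fin n) (d : Exponent n) :
    vToU i d (Sum.inl j) = d (Sum.inl j) + if i = j then 1 else 0 := by
  simp [vToU, single_apply]

@[simp] theorem vToU_inr (i j : Fin n) (d : Exponent n) :
    vToU i d (Sum.inr j) = d (Sum.inr j) - if i = j then 1 else 0 := by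
  simp [vToU, single_apply]

theorem vToU_uToV_comm {i j : Fin n} (hij : i ≠ j) (d : Exponent n) :
    vToU j (uToV i d) = uToV i (vToU j d) := by
  ext (x | x) <;> simp <;> split_ifs <;> subst_vars <;> omega

theorem vToU_uToV_self {i : Fin n} {d : Exponent n} (h : d (Sum.inl i) ≠ 0) :
    vToU i (uToV i d) = d := by
  ext (x | x) <;> by_cases hx : i = x <;> simp [hx] at h ⊢
  omega

theorem uToV_vToU_self {i : Fin n} {d : Exponent n} (h : d (Sum.inr i) ≠ 0) :
    uToV i (vToU i d) = d := by
  ext (x | x) <;> by_cases hx : i = x <;> simp [hx] at h ⊢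
  omega

theorem apply_monomial (d : Exponent n) :
    sDer n (monomial d 1) = ∑ j, (d (Sum.inr j) : ZMod 2) • monomial (vToU j d) 1 := by
  rw [sDer, mkDerivation_monomial, one_smul, Finsupp.sum_fintype _ _ (fun i => by simp),
    Fintype.sum_sum_type]
  simp only [Sum.elim_inl, Sum.elim_inr, smul_zero, Finset.sum_const_zero, zero_add]
  refine Finset.sum_congr rfl fun j _ => ?_
  rw [smul_eq_mul, X, monomial_mul, mul_one, smul_monomial, smul_eq_mul, mul_one]
  rfl

def IsVSqAt (d : Exponent n) (j : Fin n) : Prop := d (Sum.inl j) = 0 ∧ Even (d (Sum.inr j))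

def IsVSq (d : Exponent n) : Prop := ∀ j, IsVSqAt d j

def IsLead (d : Exponent n) (i : Fin n) : Prop := ¬ IsVSqAt d i ∧ ∀ j < i, IsVSqAt d j

theorem exists_isLead {d : Exponent n} (h : ¬ IsVSq d) : ∃ i, IsLead d i := by
  obtain ⟨j, hj⟩ := not_forall.mp h
  obtain ⟨i, hi, hmin⟩ := wellFounded_lt.has_min {j | ¬ IsVSqAt d j} ⟨j, hj⟩
  exact ⟨i, hi, fun k hk => by_contra fun hk' => hmin k hk' hk⟩

theorem IsLead.le {d : Exponent n} {i j : Fin n} (h : IsLead d i) (hj : ¬ IsVSqAt d j) :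
    i ≤ j :=
  le_of_not_gt fun hji => hj (h.2 j hji)

theorem IsLead.unique {d : Exponent n} {i j : Fin n} (hi : IsLead d i) (hj : IsLead d j) :
    i = j :=
  le_antisymm (hi.le hj.1) (hj.le hi.1)

theorem IsLead.lt_of_odd {d : Exponent n} {i j : Fin n} (h : IsLead d i) (hji : j ≠ i)
    (hj : Odd (d (Sum.inr j))) : i < j :=
  lt_of_le_of_ne (h.le fun hj' => Nat.not_even_iff_odd.mpr hj hj'.2) hji.symm

theorem IsLead.vToU_of_lt {d : Exponent n} {i j : Fin n} (h : IsLead d i) (hij : i < j) :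
    IsLead (vToU j d) i := by
  have hagree : ∀ k ≤ i, IsVSqAt (vToU j d) k ↔ IsVSqAt d k := fun k hk => by
    simp [IsVSqAt, (hk.trans_lt hij).ne']
  exact ⟨(hagree i le_rfl).not.mpr h.1, fun k hk => (hagree k hk.le).mpr (h.2 k hk)⟩

theorem IsLead.vToU_self {d : Exponent n} {i : Fin n} (h : IsLead d i) :
    IsLead (vToU i d) i := by
  refine ⟨fun hi' => by simp [IsVSqAt] at hi', fun k hk => ?_⟩
  simpa [IsVSqAt, hk.ne'] using h.2 k hk

open scoped Classical in
def homotopyMono (d : Exponent n) : MvPolynomial (Fin n ⊕ Fin n) (ZMod 2) :=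
  ∑ i, if IsLead d i ∧ Even (d (Sum.inr i)) then monomial (uToV i d) 1 else 0

open scoped Classical in
def projMono (d : Exponent n) : MvPolynomial (Fin n ⊕ Fin n) (ZMod 2) :=
  if IsVSq d then monomial d 1 else 0

theorem homotopyMono_of_isLead_of_even {d : Exponent n} {i : Fin n} (h : IsLead d i)
    (hi : Even (d (Sum.inr i))) : homotopyMono d = monomial (uToV i d) 1 := by
  classical
  rw [homotopyMono, Finset.sum_eq_single i (fun j _ hji => if_neg fun hj => hji (hj.1.unique h))
    (fun hi => absurd (Finset.mem_univ i) hi), if_pos ⟨h, hi⟩]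

theorem homotopyMono_of_isLead_of_odd {d : Exponent n} {i : Fin n} (h : IsLead d i)
    (hi : Odd (d (Sum.inr i))) : homotopyMono d = 0 := by
  classical
  refine Finset.sum_eq_zero fun j _ => if_neg fun hj => ?_
  rw [hj.1.unique h] at hj
  exact Nat.not_even_iff_odd.mpr hi hj.2

theorem homotopyMono_of_isVSq {d : Exponent n} (h : IsVSq d) : homotopyMono d = 0 := by
  classical
  exact Finset.sum_eq_zero fun j _ => if_neg fun hj => hj.1.1 (h j)

theorem monomial_mem_Asub {d : Exponent n} (h : IsVSq d) : monomial d 1 ∈ Asub n := by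
  rw [← prod_X_pow_eq_monomial]
  refine Subalgebra.prod_mem _ fun x hx => ?_
  rcases x with x | x
  · exact absurd (h x).1 (mem_support_iff.mp hx)
  · obtain ⟨k, hk⟩ := (h x).2
    rw [hk, ← two_mul, pow_mul]
    exact pow_mem (Algebra.subset_adjoin (Set.mem_union_right _ (Set.mem_range_self x))) k

variable (n) in
def homotopy :
    MvPolynomial (Fin n ⊕ Fin n) (ZMod 2) →ₗ[ZMod 2] MvPolynomial (Fin n ⊕ Fin n) (ZMod 2) :=
  (basisMonomials (Fin n ⊕ Fin n) (ZMod 2)).constr (ZMod 2) homotopyMono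

variable (n) in
def proj :
    MvPolynomial (Fin n ⊕ Fin n) (ZMod 2) →ₗ[ZMod 2] MvPolynomial (Fin n ⊕ Fin n) (ZMod 2) :=
  (basisMonomials (Fin n ⊕ Fin n) (ZMod 2)).constr (ZMod 2) projMono

theorem homotopy_monomial (d : Exponent n) : homotopy n (monomial d 1) = homotopyMono d := by
  simpa [homotopy] using (basisMonomials _ (ZMod 2)).constr_basis (ZMod 2) homotopyMono d

theorem proj_monomial (d : Exponent n) : proj n (monomial d 1) = projMono d := by
  simpa [proj] using (basisMonomials _ (ZMod 2)).constr_basis (ZMod 2) projMono d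

theorem proj_mem_Asub (c : MvPolynomial (Fin n ⊕ Fin n) (ZMod 2)) : proj n c ∈ Asub n := by
  have hrange : LinearMap.range (proj n) ≤ Subalgebra.toSubmodule (Asub n) := by
    rw [proj, Module.Basis.constr_range, Submodule.span_le]
    rintro _ ⟨d, rfl⟩
    by_cases h : IsVSq d
    · simpa [projMono, h] using monomial_mem_Asub h
    · simp [projMono, h]
  exact hrange (LinearMap.mem_range_self _ c)

theorem homotopy_sDer_monomial (d : Exponent n) :
    homotopy n (sDer n (monomial d 1)) =
      ∑ j, (d (Sum.inr j) : ZMod 2) • homotopyMono (vToU j d) := by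
  simp only [apply_monomial, map_sum, map_smul, homotopy_monomial]

theorem homotopy_identity_of_isVSq {d : Exponent n} (h : IsVSq d) :
    sDer n (homotopy n (monomial d 1)) + homotopy n (sDer n (monomial d 1)) +
      proj n (monomial d 1) = monomial d 1 := by
  rw [homotopy_monomial, homotopyMono_of_isVSq h,
    sDer_eq_zero_of_mem_Asub (monomial_mem_Asub h), proj_monomial, projMono, if_pos h]
  simp

theorem homotopy_identity_of_isLead_of_odd {d : Exponent n} {i : Fin n} (h : IsLead d i)
    (hi : Odd (d (Sum.inr i))) :
    sDer n (homotopy n (monomial d 1)) + homotopy n (sDer n (monomial d 1)) +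
      proj n (monomial d 1) = monomial d 1 := by
  rw [homotopy_monomial, homotopyMono_of_isLead_of_odd h hi, proj_monomial, projMono,
    if_neg fun hd => h.1 (hd i), homotopy_sDer_monomial, Finset.sum_eq_single i]
  · have hi' : Even (vToU i d (Sum.inr i)) := by
      simpa [Nat.even_sub hi.pos] using hi
    rw [homotopyMono_of_isLead_of_even h.vToU_self hi', uToV_vToU_self hi.pos.ne',
      hi.natCast_zmod_two]
    simp
  · intro j _ hji
    rcases Nat.even_or_odd (d (Sum.inr j)) with hj | hj
    · rw [hj.natCast_zmod_two, zero_smul]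
    · have hlt := h.lt_of_odd hji hj
      rw [homotopyMono_of_isLead_of_odd (h.vToU_of_lt hlt) (by simpa [hlt.ne'] using hi),
        smul_zero]
  · simp

theorem homotopy_identity_of_isLead_of_even {d : Exponent n} {i : Fin n} (h : IsLead d i)
    (hi : Even (d (Sum.inr i))) :
    sDer n (homotopy n (monomial d 1)) + homotopy n (sDer n (monomial d 1)) +
      proj n (monomial d 1) = monomial d 1 := by
  have hu : d (Sum.inl i) ≠ 0 := fun hu => h.1 ⟨hu, hi⟩
  rw [homotopy_monomial, homotopyMono_of_isLead_of_even h hi, proj_monomial, projMono,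
    if_neg fun hd => h.1 (hd i), homotopy_sDer_monomial, apply_monomial, add_zero,
    ← Finset.sum_add_distrib, Finset.sum_eq_single i]
  · rw [hi.natCast_zmod_two, zero_smul, add_zero, vToU_uToV_self hu]
    simp [(hi.add_one).natCast_zmod_two]
  · intro j _ hji
    rw [uToV_inr, if_neg hji.symm, add_zero]
    rcases Nat.even_or_odd (d (Sum.inr j)) with hj | hj
    · rw [hj.natCast_zmod_two, zero_smul, zero_smul, add_zero]
    · have hlt := h.lt_of_odd hji hj
      rw [homotopyMono_of_isLead_of_even (h.vToU_of_lt hlt) (by simpa [hlt.ne'] using hi),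
        vToU_uToV_comm hlt.ne, CharTwo.add_self_eq_zero]
  · simp

theorem homotopy_identity :
    (sDer n).toLinearMap ∘ₗ homotopy n + homotopy n ∘ₗ (sDer n).toLinearMap + proj n =
      LinearMap.id := by
  refine (basisMonomials (Fin n ⊕ Fin n) (ZMod 2)).ext fun d => ?_
  simp only [coe_basisMonomials, LinearMap.add_apply, LinearMap.comp_apply,
    Derivation.coeFn_coe, LinearMap.id_apply]
  by_cases hd : IsVSq d
  · exact homotopy_identity_of_isVSq hd
  obtain ⟨i, hi⟩ := exists_isLead hd
  rcases Nat.even_or_odd (d (Sum.inr i)) with he | ho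
  · exact homotopy_identity_of_isLead_of_even hi he
  · exact homotopy_identity_of_isLead_of_odd hi ho

end

end sDer

/-- `ker(s) = im(s) + A` inside `C`. -/
theorem stmt3 (n : ℕ) (c : MvPolynomial (Fin n ⊕ Fin n) (ZMod 2)) :
    sDer n c = 0 ↔ ∃ x : MvPolynomial (Fin n ⊕ Fin n) (ZMod 2),
      ∃ a ∈ Asub n, c = sDer n x + a := by
  constructor
  · intro hc
    refine ⟨sDer.homotopy n c, sDer.proj n c, sDer.proj_mem_Asub c, ?_⟩
    simpa [hc] using (LinearMap.congr_fun sDer.homotopy_identity c).symm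
  · rintro ⟨x, a, ha, rfl⟩
    rw [map_add, sDer_sDer, sDer_eq_zero_of_mem_Asub ha, add_zero]
end

section
/- With k = ℤ/2, C = k[u_1,…,u_n,v_1,…,v_n], s the derivation with s(u_i)=0, s(v_i)=u_i, and A the subring generated by the u_i and v_i^2: the A-algebra B = ker(s) is generated as an A-module by 1 together with the elements s(v_T) for subsets T ⊆ {1,…,n} of cardinality ≥ 2, where v_T = ∏_{i∈T} v_i. -/
open MvPolynomial

/-!
Proof idea: `ker s` is computed with a contracting homotopy defined on monomials. For a
monomial `m = u^a v^b`, let `j` be the least index with `aⱼ ≠ 0` or `bⱼ` odd, and put `h m = 0`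
if `bⱼ` is odd, `h m = m vⱼ / uⱼ` otherwise. In characteristic two, `s h + h s = 1 - π`, where `π`
keeps exactly the monomials that are products of the `vᵢ²`, which lie in `A`. So
`c ∈ ker s` gives `c = s (h c) + π c`. Writing a monomial as `a · v_T` with `a ∈ A` and `T` the
set of odd `v`-exponents gives `s m = a · s(v_T)`, and `s(v_T)` is `0`, some `uᵢ`, or a
generator according as `|T|` is `0`, `1` or at least `2`. Conversely `A ⊆ ker s` and `s² = 0`.
-/

lemma Subalgebra.mul_mem_span {S A : Type*} [CommSemiring S] [Semiring A] [Algebra S A]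
    {B : Subalgebra S A} {s : Set A} {a x : A} (ha : a ∈ B) (hx : x ∈ Submodule.span B s) :
    a * x ∈ Submodule.span B s :=
  Submodule.smul_mem _ (⟨a, ha⟩ : B) hx

lemma Subalgebra.mem_span_of_one_mem {S A : Type*} [CommSemiring S] [Semiring A] [Algebra S A]
    {B : Subalgebra S A} {s : Set A} {a : A} (hs : (1 : A) ∈ s) (ha : a ∈ B) :
    a ∈ Submodule.span B s :=
  mul_one a ▸ Subalgebra.mul_mem_span ha (Submodule.subset_span hs)

namespace MvPolynomial

variable {σ R : Type*} [CommRing R]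

variable (σ R) in
noncomputable def uvDerivation :
    Derivation R (MvPolynomial (σ ⊕ σ) R) (MvPolynomial (σ ⊕ σ) R) :=
  mkDerivation R (Sum.elim (fun _ => 0) (fun i => X (Sum.inl i)))

variable (σ R) in
noncomputable def uvSqSubalgebra : Subalgebra R (MvPolynomial (σ ⊕ σ) R) :=
  Algebra.adjoin R
    (Set.range (fun i => X (Sum.inl i)) ∪ Set.range (fun i => X (Sum.inr i) ^ 2))

variable (σ R) in
def uvGenerators : Set (MvPolynomial (σ ⊕ σ) R) :=
  insert 1 {x | ∃ T : Finset σ, 2 ≤ T.card ∧ x = uvDerivation σ R (∏ i ∈ T, X (Sum.inr i))}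

@[simp]
lemma uvDerivation_X_inl (i : σ) : uvDerivation σ R (X (Sum.inl i)) = 0 :=
  mkDerivation_X _ _ _

@[simp]
lemma uvDerivation_X_inr (i : σ) : uvDerivation σ R (X (Sum.inr i)) = X (Sum.inl i) :=
  mkDerivation_X _ _ _

lemma X_inl_mem_uvSqSubalgebra (i : σ) : X (Sum.inl i) ∈ uvSqSubalgebra σ R :=
  Algebra.subset_adjoin (Or.inl ⟨i, rfl⟩)

lemma X_inr_sq_mem_uvSqSubalgebra (i : σ) : X (Sum.inr i) ^ 2 ∈ uvSqSubalgebra σ R :=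
  Algebra.subset_adjoin (Or.inr ⟨i, rfl⟩)

lemma monomial_one_mem_uvSqSubalgebra {d : σ ⊕ σ →₀ ℕ} (hd : ∀ i, Even (d (Sum.inr i))) :
    monomial d 1 ∈ uvSqSubalgebra σ R := by
  rw [monomial_eq, map_one, one_mul]
  refine prod_mem fun x _ => ?_
  rcases x with i | i
  · exact pow_mem (X_inl_mem_uvSqSubalgebra i) _
  · obtain ⟨m, hm⟩ := (hd i).two_dvd
    show X _ ^ _ ∈ _
    rw [hm, pow_mul]
    exact pow_mem (X_inr_sq_mem_uvSqSubalgebra i) _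

section Exponents

variable (d : σ ⊕ σ →₀ ℕ) {i j : σ}

def oddVars : Finset σ :=
  d.support.toRight.filter fun i => Odd (d (Sum.inr i))

variable {d} in
@[simp]
lemma mem_oddVars : i ∈ oddVars d ↔ Odd (d (Sum.inr i)) := by
  simp only [oddVars, Finset.mem_filter, Finset.mem_toRight, Finsupp.mem_support_iff,
    and_iff_right_iff_imp]
  exact fun h => h.pos.ne'

variable [DecidableEq σ]

def activeVars : Finset σ :=
  d.support.toLeft ∪ oddVars d

noncomputable def vToU (i : σ) : σ ⊕ σ →₀ ℕ :=
  d - Finsupp.single (Sum.inr i) 1 + Finsupp.single (Sum.inl i) 1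

noncomputable def uToV (i : σ) : σ ⊕ σ →₀ ℕ :=
  d - Finsupp.single (Sum.inl i) 1 + Finsupp.single (Sum.inr i) 1

variable {d}

@[simp]
lemma mem_activeVars : i ∈ activeVars d ↔ d (Sum.inl i) ≠ 0 ∨ Odd (d (Sum.inr i)) := by
  simp [activeVars]

@[simp]
lemma vToU_inl (a : σ) : vToU d i (Sum.inl a) = d (Sum.inl a) + if a = i then 1 else 0 := by
  simp [vToU, Finsupp.single_apply, eq_comm]

@[simp]
lemma vToU_inr (a : σ) : vToU d i (Sum.inr a) = d (Sum.inr a) - if a = i then 1 else 0 := by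
  simp [vToU, Finsupp.single_apply, eq_comm]

@[simp]
lemma uToV_inl (a : σ) : uToV d i (Sum.inl a) = d (Sum.inl a) - if a = i then 1 else 0 := by
  simp [uToV, Finsupp.single_apply, eq_comm]

@[simp]
lemma uToV_inr (a : σ) : uToV d i (Sum.inr a) = d (Sum.inr a) + if a = i then 1 else 0 := by
  simp [uToV, Finsupp.single_apply, eq_comm]

lemma oddVars_vToU (hi : i ∈ oddVars d) : oddVars (vToU d i) = (oddVars d).erase i := by
  ext a
  rw [mem_oddVars] at hi
  by_cases ha : a = i
  · subst ha; simp [Nat.odd_iff] at hi ⊢; omega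
  · simp [ha]

lemma activeVars_vToU (hi : i ∈ oddVars d) : activeVars (vToU d i) = activeVars d := by
  ext a
  rw [mem_oddVars] at hi
  by_cases ha : a = i
  · subst ha; simp [hi]
  · simp [ha]

lemma oddVars_uToV (hj : j ∉ oddVars d) : oddVars (uToV d j) = insert j (oddVars d) := by
  ext a
  rw [mem_oddVars] at hj
  by_cases ha : a = j
  · subst ha; simp [Nat.odd_iff] at hj ⊢; omega
  · simp [ha]

lemma uToV_vToU_self (hj : d (Sum.inr j) ≠ 0) : uToV (vToU d j) j = d := by
  ext (a | a) <;> by_cases ha : a = j <;> simp [ha]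
  all_goals omega

lemma vToU_uToV_self (hj : d (Sum.inl j) ≠ 0) : vToU (uToV d j) j = d := by
  ext (a | a) <;> by_cases ha : a = j <;> simp [ha]
  all_goals omega

lemma uToV_vToU_comm (hij : i ≠ j) : uToV (vToU d i) j = vToU (uToV d j) i := by
  ext (a | a) <;> by_cases ha : a = j <;> by_cases ha' : a = i <;> simp_all

end Exponents

lemma exists_mem_uvSqSubalgebra_monomial_eq_mul (d : σ ⊕ σ →₀ ℕ) :
    ∃ a ∈ uvSqSubalgebra σ R, monomial d 1 = a * ∏ i ∈ oddVars d, X (Sum.inr i) := by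
  classical
  set e : σ ⊕ σ →₀ ℕ := ∑ i ∈ oddVars d, Finsupp.single (Sum.inr i) 1
  have he : ∀ x, e x =
      Sum.elim (fun _ => 0) (fun i => if Odd (d (Sum.inr i)) then 1 else 0) x := by
    rintro (i | i) <;> simp [e, Finsupp.finsetSum_apply, Finsupp.single_apply]
  have hle : e ≤ d := fun x => by
    rcases x with i | i <;> simp only [he, Sum.elim_inl, Sum.elim_inr]
    · exact Nat.zero_le _
    · split_ifs with hi
      exacts [hi.pos, Nat.zero_le _]
  refine ⟨monomial (d - e) 1, monomial_one_mem_uvSqSubalgebra fun i => ?_, ?_⟩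
  · rw [Finsupp.tsub_apply, he, Sum.elim_inr]
    split_ifs with hi
    · exact Nat.Odd.sub_odd hi odd_one
    · simpa using hi
  · rw [show ∏ i ∈ oddVars d, (X (Sum.inr i) : MvPolynomial (σ ⊕ σ) R) = monomial e 1 from
      (monomial_sum_one _ _).symm, monomial_mul, one_mul, tsub_add_cancel_of_le hle]

lemma uvDerivation_prod_X_inr_mem_span (T : Finset σ) :
    uvDerivation σ R (∏ i ∈ T, X (Sum.inr i)) ∈
      Submodule.span (uvSqSubalgebra σ R) (uvGenerators σ R) := by
  rcases lt_or_ge T.card 2 with hT | hT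
  · obtain h0 | h1 : T.card = 0 ∨ T.card = 1 := by omega
    · rw [Finset.card_eq_zero.mp h0, Finset.prod_empty, Derivation.map_one_eq_zero]
      exact zero_mem _
    · obtain ⟨i, rfl⟩ := Finset.card_eq_one.mp h1
      rw [Finset.prod_singleton, uvDerivation_X_inr]
      exact Subalgebra.mem_span_of_one_mem (Set.mem_insert _ _) (X_inl_mem_uvSqSubalgebra i)
  · exact Submodule.subset_span (Or.inr ⟨T, hT, rfl⟩)

section CharTwo

variable [CharP R 2]

lemma uvDerivation_eq_zero_of_mem {a : MvPolynomial (σ ⊕ σ) R} (ha : a ∈ uvSqSubalgebra σ R) :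
    uvDerivation σ R a = 0 := by
  induction ha using Algebra.adjoin_induction with
  | mem x hx =>
    rcases hx with ⟨i, rfl⟩ | ⟨i, rfl⟩
    · exact uvDerivation_X_inl i
    · rw [Derivation.leibniz_pow, two_nsmul, CharTwo.add_self_eq_zero]
  | algebraMap r => exact (uvDerivation σ R).map_algebraMap r
  | add x y _ _ hx hy => rw [map_add, hx, hy, add_zero]
  | mul x y _ _ hx hy => rw [Derivation.leibniz, hx, hy, smul_zero, smul_zero, add_zero]

lemma uvDerivation_uvDerivation (p : MvPolynomial (σ ⊕ σ) R) :
    uvDerivation σ R (uvDerivation σ R p) = 0 := by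
  induction p using MvPolynomial.induction_on with
  | C a => rw [derivation_C, map_zero]
  | add p q hp hq => rw [map_add, map_add, hp, hq, add_zero]
  | mul_X p x hp =>
    have hX : uvDerivation σ R (uvDerivation σ R (X x)) = 0 := by
      rcases x with i | i <;> simp
    simp only [Derivation.leibniz, smul_eq_mul, map_add, hp, hX, mul_zero, zero_add]
    rw [mul_comm, CharTwo.add_self_eq_zero]

lemma uvDerivation_monomial [DecidableEq σ] (d : σ ⊕ σ →₀ ℕ) :
    uvDerivation σ R (monomial d 1) = ∑ i ∈ oddVars d, monomial (vToU d i) 1 := by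
  rw [uvDerivation, mkDerivation_monomial, one_smul, Finsupp.sum,
    Finset.sum_sum_eq_sum_toLeft_add_sum_toRight, oddVars, Finset.sum_filter]
  simp only [Sum.elim_inl, smul_zero, Finset.sum_const_zero, zero_add, Sum.elim_inr]
  refine Finset.sum_congr rfl fun i _ => ?_
  rw [CharTwo.natCast_eq_ite]
  rcases Nat.even_or_odd (d (Sum.inr i)) with heven | hodd
  · rw [if_pos heven, if_neg (Nat.not_odd_iff_even.2 heven), monomial_zero, zero_smul]
  · rw [if_neg (Nat.not_even_iff_odd.2 hodd), if_pos hodd, smul_eq_mul, X, monomial_mul, mul_one,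
      vToU]

lemma uvDerivation_mem_span (p : MvPolynomial (σ ⊕ σ) R) :
    uvDerivation σ R p ∈ Submodule.span (uvSqSubalgebra σ R) (uvGenerators σ R) := by
  induction p using MvPolynomial.induction_on' with
  | monomial d r =>
    obtain ⟨a, ha, hd⟩ := exists_mem_uvSqSubalgebra_monomial_eq_mul (R := R) d
    rw [← mul_one r, ← smul_eq_mul, ← smul_monomial, Derivation.map_smul, hd,
      Derivation.leibniz, uvDerivation_eq_zero_of_mem ha, smul_zero, add_zero, smul_eq_mul]
    exact Submodule.smul_of_tower_mem _ r
      (Subalgebra.mul_mem_span ha (uvDerivation_prod_X_inr_mem_span _))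
  | add p q hp hq =>
    rw [map_add]
    exact add_mem hp hq

end CharTwo

section Homotopy

variable [LinearOrder σ]

variable (R) in
noncomputable def homotopyMonomial (d : σ ⊕ σ →₀ ℕ) : MvPolynomial (σ ⊕ σ) R :=
  WithTop.recTopCoe 0 (fun j => if j ∈ oddVars d then 0 else monomial (uToV d j) 1)
    (activeVars d).min

variable (R) in
noncomputable def projMonomial (d : σ ⊕ σ →₀ ℕ) : MvPolynomial (σ ⊕ σ) R :=
  if activeVars d = ∅ then monomial d 1 else 0

variable (σ R) in
noncomputable def uvHomotopy : MvPolynomial (σ ⊕ σ) R →ₗ[R] MvPolynomial (σ ⊕ σ) R :=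
  (basisMonomials (σ ⊕ σ) R).constr R (homotopyMonomial R)

variable (σ R) in
noncomputable def uvProjection : MvPolynomial (σ ⊕ σ) R →ₗ[R] MvPolynomial (σ ⊕ σ) R :=
  (basisMonomials (σ ⊕ σ) R).constr R (projMonomial R)

variable {d : σ ⊕ σ →₀ ℕ} {i j : σ}

lemma uvHomotopy_monomial_one : uvHomotopy σ R (monomial d 1) = homotopyMonomial R d :=
  (basisMonomials (σ ⊕ σ) R).constr_basis R _ d

lemma uvProjection_monomial_one : uvProjection σ R (monomial d 1) = projMonomial R d :=
  (basisMonomials (σ ⊕ σ) R).constr_basis R _ d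

lemma homotopyMonomial_of_min_eq (hj : (activeVars d).min = j) :
    homotopyMonomial R d = if j ∈ oddVars d then 0 else monomial (uToV d j) 1 := by
  rw [homotopyMonomial, hj]
  rfl

lemma homotopyMonomial_vToU (hi : i ∈ oddVars d) (hj : (activeVars d).min = j) :
    homotopyMonomial R (vToU d i) =
      if j ≠ i ∧ j ∈ oddVars d then 0 else monomial (uToV (vToU d i) j) 1 := by
  rw [homotopyMonomial_of_min_eq (by rwa [activeVars_vToU hi])]
  simp only [oddVars_vToU hi, Finset.mem_erase]

lemma projMonomial_mem_uvSqSubalgebra (d : σ ⊕ σ →₀ ℕ) :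
    projMonomial R d ∈ uvSqSubalgebra σ R := by
  unfold projMonomial
  split_ifs with hempty
  · refine monomial_one_mem_uvSqSubalgebra fun i => Nat.not_odd_iff_even.mp fun hi => ?_
    simpa [hempty] using mem_activeVars.mpr (Or.inr hi)
  · exact zero_mem _

lemma uvProjection_mem_uvSqSubalgebra (p : MvPolynomial (σ ⊕ σ) R) :
    uvProjection σ R p ∈ uvSqSubalgebra σ R := by
  have hrange :
      LinearMap.range (uvProjection σ R) ≤ Subalgebra.toSubmodule (uvSqSubalgebra σ R) := by
    rw [uvProjection, Module.Basis.constr_range, Submodule.span_le]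
    rintro _ ⟨d, rfl⟩
    exact projMonomial_mem_uvSqSubalgebra d
  exact hrange ⟨p, rfl⟩

variable [CharP R 2]

lemma uvDerivation_homotopyMonomial_add (d : σ ⊕ σ →₀ ℕ) :
    uvDerivation σ R (homotopyMonomial R d) + uvHomotopy σ R (uvDerivation σ R (monomial d 1)) =
      monomial d 1 - projMonomial R d := by
  simp only [uvDerivation_monomial, map_sum, uvHomotopy_monomial_one]
  rcases hmin : (activeVars d).min with _ | j
  · have hempty : activeVars d = ∅ := Finset.min_eq_top.mp hmin
    have hodd : oddVars d = ∅ := (Finset.union_eq_empty.mp hempty).2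
    rw [homotopyMonomial, hmin, projMonomial, if_pos hempty, hodd, Finset.sum_empty]
    rw [add_zero, sub_self]
    exact map_zero _
  have hj : j ∈ activeVars d := Finset.mem_of_min hmin
  rw [projMonomial, if_neg (Finset.ne_empty_of_mem hj), sub_zero,
    homotopyMonomial_of_min_eq hmin]
  by_cases hjodd : j ∈ oddVars d
  · rw [if_pos hjodd, map_zero, zero_add, Finset.sum_eq_single_of_mem j hjodd]
    · rw [homotopyMonomial_vToU hjodd hmin, if_neg (fun h => h.1 rfl),
        uToV_vToU_self (mem_oddVars.mp hjodd).pos.ne']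
    · intro i hi hij
      rw [homotopyMonomial_vToU hi hmin, if_pos ⟨hij.symm, hjodd⟩]
  · have hju : d (Sum.inl j) ≠ 0 :=
      (mem_activeVars.mp hj).resolve_right (mt mem_oddVars.mpr hjodd)
    have hterm : ∀ i ∈ oddVars d,
        homotopyMonomial R (vToU d i) = monomial (vToU (uToV d j) i) 1 := fun i hi => by
      rw [homotopyMonomial_vToU hi hmin, if_neg (fun h => hjodd h.2),
        uToV_vToU_comm (ne_of_mem_of_not_mem hi hjodd)]
    -- `h (s m)` reproduces the terms of `s (h m)` other than `m`; they cancel in characteristic 2.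
    rw [if_neg hjodd, uvDerivation_monomial, oddVars_uToV hjodd, Finset.sum_insert hjodd,
      vToU_uToV_self hju, Finset.sum_congr rfl hterm, add_assoc, CharTwo.add_self_eq_zero,
      add_zero]

lemma uvDerivation_comp_uvHomotopy_add :
    (uvDerivation σ R).toLinearMap ∘ₗ uvHomotopy σ R +
        uvHomotopy σ R ∘ₗ (uvDerivation σ R).toLinearMap =
      LinearMap.id - uvProjection σ R :=
  (basisMonomials (σ ⊕ σ) R).ext fun d => by
    simpa [uvHomotopy_monomial_one, uvProjection_monomial_one] using
      uvDerivation_homotopyMonomial_add d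

end Homotopy

section CharTwo

variable [CharP R 2]

lemma mem_span_of_uvDerivation_eq_zero {c : MvPolynomial (σ ⊕ σ) R}
    (hc : uvDerivation σ R c = 0) :
    c ∈ Submodule.span (uvSqSubalgebra σ R) (uvGenerators σ R) := by
  let : LinearOrder σ := IsWellOrder.linearOrder WellOrderingRel
  have hhom := LinearMap.congr_fun uvDerivation_comp_uvHomotopy_add c
  simp only [LinearMap.add_apply, LinearMap.comp_apply, Derivation.coeFn_coe, hc, map_zero,
    add_zero, LinearMap.sub_apply, LinearMap.id_apply] at hhom
  rw [← sub_add_cancel c (uvProjection σ R c), ← hhom]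
  exact add_mem (uvDerivation_mem_span _)
    (Subalgebra.mem_span_of_one_mem (Set.mem_insert _ _) (uvProjection_mem_uvSqSubalgebra c))

lemma uvDerivation_eq_zero_of_mem_span {c : MvPolynomial (σ ⊕ σ) R}
    (hc : c ∈ Submodule.span (uvSqSubalgebra σ R) (uvGenerators σ R)) :
    uvDerivation σ R c = 0 := by
  induction hc using Submodule.span_induction with
  | mem x hx =>
    rcases hx with rfl | ⟨T, -, rfl⟩
    exacts [Derivation.map_one_eq_zero _, uvDerivation_uvDerivation _]
  | zero => exact map_zero _
  | add x y _ _ hx hy => rw [map_add, hx, hy, add_zero]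
  | smul a x _ hx =>
    rw [Subalgebra.smul_def, smul_eq_mul, Derivation.leibniz, hx,
      uvDerivation_eq_zero_of_mem a.2, smul_zero, smul_zero, add_zero]

theorem uvDerivation_eq_zero_iff_mem_span (c : MvPolynomial (σ ⊕ σ) R) :
    uvDerivation σ R c = 0 ↔ c ∈ Submodule.span (uvSqSubalgebra σ R) (uvGenerators σ R) :=
  ⟨mem_span_of_uvDerivation_eq_zero, uvDerivation_eq_zero_of_mem_span⟩

end CharTwo

end MvPolynomial

/-- `B = ker(s)` is generated as an `A`-module by `1` together with the elements
`s(v_T)` for `T ⊆ {1,…,n}` with `|T| ≥ 2`. -/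
theorem stmt5 (n : ℕ) (c : MvPolynomial (Fin n ⊕ Fin n) (ZMod 2)) :
    sDer n c = 0 ↔
      c ∈ Submodule.span (Asub n)
        (insert (1 : MvPolynomial (Fin n ⊕ Fin n) (ZMod 2))
          {x | ∃ T : Finset (Fin n), 2 ≤ T.card ∧
            x = sDer n (∏ i ∈ T, X (Sum.inr i))}) := by
  exact uvDerivation_eq_zero_iff_mem_span c
end

section
/- In C = k[u_1,…,u_n,v_1,…,v_n] over k = ℤ/2, for subsets T,U ⊆ {1,…,n} (with T ≠ U in case both have cardinality 2, and |T|,|U| ≥ 2), one has s(v_T)·s(v_U) = Σ_{p∈T} (∏_{q ∈ T∩U∖{p}} v_q^2) · u_p · s(v_{(T∖{p}) Δ U}), where Δ is symmetric difference, v_T = ∏_{i∈T} v_i, and s is the derivation with s(u_i)=0, s(v_i)=u_i (with conventions s(v_∅)=0, s(v_{{i}})=u_i). -/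
open MvPolynomial

lemma sDer_X (n : ℕ) (i : Fin n) : sDer n (X (Sum.inr i)) = X (Sum.inl i) := by
  simp [sDer, mkDerivation_X]

lemma sDer_prod (n : ℕ) (S : Finset (Fin n)) :
    sDer n (∏ i ∈ S, X (Sum.inr i)) =
      ∑ p ∈ S, X (Sum.inl p) * ∏ i ∈ S.erase p, X (Sum.inr i) := by
  classical
  induction S using Finset.induction_on with
  | empty => simp
  | @insert a s ha ih =>
    rw [Finset.prod_insert ha, Derivation.leibniz, smul_eq_mul, smul_eq_mul, ih,
      Finset.sum_insert ha, sDer_X, Finset.mul_sum, Finset.erase_insert ha, add_comm]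
    congr 1
    · ring
    · apply Finset.sum_congr rfl
      intro p hp
      rw [Finset.erase_insert_of_ne (by rintro rfl; exact ha hp),
        Finset.prod_insert (fun h => ha (Finset.mem_of_mem_erase h))]
      ring

lemma key1 (n : ℕ) (A U : Finset (Fin n)) :
    (∏ q ∈ A ∩ U, (X (Sum.inr q) : MvPolynomial (Fin n ⊕ Fin n) (ZMod 2)) ^ 2) *
        ∏ i ∈ symmDiff A U, X (Sum.inr i) =
      (∏ i ∈ A, X (Sum.inr i)) * ∏ i ∈ U, X (Sum.inr i) := by
  classical
  have h1 : (∏ i ∈ A \ U, (X (Sum.inr i) : MvPolynomial (Fin n ⊕ Fin n) (ZMod 2))) *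
      ∏ i ∈ A ∩ U, X (Sum.inr i) = ∏ i ∈ A, X (Sum.inr i) := by
    rw [← Finset.sdiff_inter_self_left A U]
    exact Finset.prod_sdiff Finset.inter_subset_left
  have h2 : (∏ i ∈ U \ A, (X (Sum.inr i) : MvPolynomial (Fin n ⊕ Fin n) (ZMod 2))) *
      ∏ i ∈ A ∩ U, X (Sum.inr i) = ∏ i ∈ U, X (Sum.inr i) := by
    rw [Finset.inter_comm, ← Finset.sdiff_inter_self_left U A]
    exact Finset.prod_sdiff Finset.inter_subset_left
  rw [symmDiff_def, Finset.sup_eq_union,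
    Finset.prod_union disjoint_sdiff_sdiff, Finset.prod_pow, ← h1, ← h2]
  ring

lemma key2 (n : ℕ) (A U : Finset (Fin n)) {r : Fin n} (hrU : r ∈ U) (hrA : r ∉ A) :
    (∏ q ∈ A ∩ U, (X (Sum.inr q) : MvPolynomial (Fin n ⊕ Fin n) (ZMod 2)) ^ 2) *
        ∏ i ∈ (symmDiff A U).erase r, X (Sum.inr i) =
      (∏ i ∈ A, X (Sum.inr i)) * ∏ i ∈ U.erase r, X (Sum.inr i) := by
  classical
  have hr : r ∈ symmDiff A U := by
    rw [Finset.mem_symmDiff]; exact Or.inr ⟨hrU, hrA⟩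
  have h1 : (X (Sum.inr r) : MvPolynomial (Fin n ⊕ Fin n) (ZMod 2)) *
      ∏ i ∈ (symmDiff A U).erase r, X (Sum.inr i) =
      ∏ i ∈ symmDiff A U, X (Sum.inr i) := Finset.mul_prod_erase _ (fun i => X (Sum.inr i)) hr
  have h2 : (X (Sum.inr r) : MvPolynomial (Fin n ⊕ Fin n) (ZMod 2)) *
      ∏ i ∈ U.erase r, X (Sum.inr i) =
      ∏ i ∈ U, X (Sum.inr i) := Finset.mul_prod_erase _ (fun i => X (Sum.inr i)) hrU
  apply mul_left_cancel₀
    (X_ne_zero (R := ZMod 2) (Sum.inr r : Fin n ⊕ Fin n))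
  calc X (Sum.inr r) * ((∏ q ∈ A ∩ U,
          (X (Sum.inr q) : MvPolynomial (Fin n ⊕ Fin n) (ZMod 2)) ^ 2) *
        ∏ i ∈ (symmDiff A U).erase r, X (Sum.inr i))
      = (∏ q ∈ A ∩ U, (X (Sum.inr q) : MvPolynomial (Fin n ⊕ Fin n) (ZMod 2)) ^ 2) *
        (X (Sum.inr r) * ∏ i ∈ (symmDiff A U).erase r, X (Sum.inr i)) := by ring
    _ = (∏ q ∈ A ∩ U, (X (Sum.inr q) : MvPolynomial (Fin n ⊕ Fin n) (ZMod 2)) ^ 2) *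
        ∏ i ∈ symmDiff A U, X (Sum.inr i) := by rw [h1]
    _ = (∏ i ∈ A, X (Sum.inr i)) * ∏ i ∈ U, X (Sum.inr i) := key1 n A U
    _ = (∏ i ∈ A, X (Sum.inr i)) *
        (X (Sum.inr r) * ∏ i ∈ U.erase r, X (Sum.inr i)) := by rw [h2]
    _ = X (Sum.inr r) * ((∏ i ∈ A, X (Sum.inr i)) *
        ∏ i ∈ U.erase r, X (Sum.inr i)) := by ring

lemma key3 (n : ℕ) (A U : Finset (Fin n)) {r : Fin n} (hrA : r ∈ A) (hrU : r ∉ U) :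
    (∏ q ∈ A ∩ U, (X (Sum.inr q) : MvPolynomial (Fin n ⊕ Fin n) (ZMod 2)) ^ 2) *
        ∏ i ∈ (symmDiff A U).erase r, X (Sum.inr i) =
      (∏ i ∈ A.erase r, X (Sum.inr i)) * ∏ i ∈ U, X (Sum.inr i) := by
  classical
  have hr : r ∈ symmDiff A U := by
    rw [Finset.mem_symmDiff]; exact Or.inl ⟨hrA, hrU⟩
  have h1 : (X (Sum.inr r) : MvPolynomial (Fin n ⊕ Fin n) (ZMod 2)) *
      ∏ i ∈ (symmDiff A U).erase r, X (Sum.inr i) =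
      ∏ i ∈ symmDiff A U, X (Sum.inr i) := Finset.mul_prod_erase _ (fun i => X (Sum.inr i)) hr
  have h2 : (X (Sum.inr r) : MvPolynomial (Fin n ⊕ Fin n) (ZMod 2)) *
      ∏ i ∈ A.erase r, X (Sum.inr i) =
      ∏ i ∈ A, X (Sum.inr i) := Finset.mul_prod_erase _ (fun i => X (Sum.inr i)) hrA
  apply mul_left_cancel₀
    (X_ne_zero (R := ZMod 2) (Sum.inr r : Fin n ⊕ Fin n))
  calc X (Sum.inr r) * ((∏ q ∈ A ∩ U,
          (X (Sum.inr q) : MvPolynomial (Fin n ⊕ Fin n) (ZMod 2)) ^ 2) *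
        ∏ i ∈ (symmDiff A U).erase r, X (Sum.inr i))
      = (∏ q ∈ A ∩ U, (X (Sum.inr q) : MvPolynomial (Fin n ⊕ Fin n) (ZMod 2)) ^ 2) *
        (X (Sum.inr r) * ∏ i ∈ (symmDiff A U).erase r, X (Sum.inr i)) := by ring
    _ = (∏ q ∈ A ∩ U, (X (Sum.inr q) : MvPolynomial (Fin n ⊕ Fin n) (ZMod 2)) ^ 2) *
        ∏ i ∈ symmDiff A U, X (Sum.inr i) := by rw [h1]
    _ = (∏ i ∈ A, X (Sum.inr i)) * ∏ i ∈ U, X (Sum.inr i) := key1 n A U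
    _ = (X (Sum.inr r) * ∏ i ∈ A.erase r, X (Sum.inr i)) *
        ∏ i ∈ U, X (Sum.inr i) := by rw [h2]
    _ = X (Sum.inr r) * ((∏ i ∈ A.erase r, X (Sum.inr i)) *
        ∏ i ∈ U, X (Sum.inr i)) := by ring

/-- `s(v_T)·s(v_U) = Σ_{p∈T} (∏_{q∈T∩U∖{p}} v_q²) · u_p · s(v_{(T∖{p}) Δ U})`,
for `|T|, |U| ≥ 2`, with `T ≠ U` in case both have cardinality `2`. -/
theorem stmt8 (n : ℕ) (T U : Finset (Fin n)) (hT : 2 ≤ T.card) (hU : 2 ≤ U.card)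
    (hTU : T.card = 2 → U.card = 2 → T ≠ U) :
    sDer n (∏ i ∈ T, X (Sum.inr i)) * sDer n (∏ i ∈ U, X (Sum.inr i)) =
      ∑ p ∈ T, (∏ q ∈ (T ∩ U).erase p, (X (Sum.inr q)) ^ 2) * X (Sum.inl p)
        * sDer n (∏ i ∈ symmDiff (T.erase p) U, X (Sum.inr i)) := by
  classical
  set P := MvPolynomial (Fin n ⊕ Fin n) (ZMod 2) with hP
  haveI : CharP P 2 := inferInstance
  set F : Fin n → Fin n → P := fun p r =>
    X (Sum.inl p) * X (Sum.inl r) * (∏ i ∈ (T.erase p).erase r, X (Sum.inr i)) *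
      ∏ i ∈ U, X (Sum.inr i) with hF
  set A : Fin n → Fin n → P := fun p r =>
    (X (Sum.inl p) * ∏ i ∈ T.erase p, X (Sum.inr i)) *
      (X (Sum.inl r) * ∏ i ∈ U.erase r, X (Sum.inr i)) with hA
  have Fsymm : ∀ p r, F p r = F r p := by
    intro p r
    simp only [hF]
    rw [Finset.erase_right_comm]
    ring
  have main0 : ∑ p ∈ T, ∑ r ∈ T.erase p, F p r = 0 := by
    rw [Finset.sum_sigma']
    apply Finset.sum_involution (fun a _ => (⟨a.2, a.1⟩ : (_ : Fin n) × Fin n))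
    · intro a ha
      rw [Fsymm a.1 a.2]
      exact CharTwo.add_self_eq_zero _
    · intro a ha _
      intro h
      have h1 : a.2 = a.1 := congrArg Sigma.fst h
      rw [Finset.mem_sigma] at ha
      exact (Finset.mem_erase.mp ha.2).1 h1
    · intro a ha
      rw [Finset.mem_sigma] at ha ⊢
      refine ⟨Finset.mem_of_mem_erase ha.2, Finset.mem_erase.mpr ⟨?_, ha.1⟩⟩
      exact fun h => (Finset.mem_erase.mp ha.2).1 h.symm
    · intro a ha
      rfl
  rw [sDer_prod, sDer_prod, Finset.sum_mul_sum]
  simp only [sDer_prod]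
  have hLHS : ∀ p ∈ T, (∑ r ∈ U,
      (X (Sum.inl p) * ∏ i ∈ T.erase p, X (Sum.inr i)) *
        (X (Sum.inl r) * ∏ i ∈ U.erase r, X (Sum.inr i))) =
      (∑ r ∈ U \ T.erase p, A p r) + ∑ r ∈ U ∩ T.erase p, F p r := by
    intro p hp
    have hsplit : (∑ r ∈ U, A p r) =
        (∑ r ∈ U \ T.erase p, A p r) + ∑ r ∈ U ∩ T.erase p, A p r := by
      rw [← Finset.sum_union (Finset.disjoint_sdiff_inter U (T.erase p)),
        Finset.sdiff_union_inter]
    rw [hsplit]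
    congr 1
    apply Finset.sum_congr rfl
    intro r hr
    rw [Finset.mem_inter] at hr
    have e1 : (X (Sum.inr r) : P) * ∏ i ∈ (T.erase p).erase r, X (Sum.inr i) =
        ∏ i ∈ T.erase p, X (Sum.inr i) := Finset.mul_prod_erase _ (fun i => X (Sum.inr i)) hr.2
    have e2 : (X (Sum.inr r) : P) * ∏ i ∈ U.erase r, X (Sum.inr i) =
        ∏ i ∈ U, X (Sum.inr i) := Finset.mul_prod_erase _ (fun i => X (Sum.inr i)) hr.1
    simp only [hA, hF]
    rw [← e1, ← e2]
    ring
  have hRHS : ∀ p ∈ T,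
      (∏ q ∈ (T ∩ U).erase p, (X (Sum.inr q) : P) ^ 2) * X (Sum.inl p) *
        ∑ r ∈ symmDiff (T.erase p) U, X (Sum.inl r) *
          ∏ i ∈ (symmDiff (T.erase p) U).erase r, X (Sum.inr i) =
      (∑ r ∈ U \ T.erase p, A p r) + ∑ r ∈ T.erase p \ U, F p r := by
    intro p hp
    have hw : (T.erase p) ∩ U = (T ∩ U).erase p := Finset.erase_inter p T U
    have hsd : symmDiff (T.erase p) U = (T.erase p \ U) ∪ (U \ T.erase p) := by
      rw [symmDiff_def, Finset.sup_eq_union]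
    rw [hsd, Finset.sum_union disjoint_sdiff_sdiff, mul_add, add_comm]
    congr 1
    · rw [Finset.mul_sum]
      apply Finset.sum_congr rfl
      intro r hr
      rw [Finset.mem_sdiff] at hr
      have e := key2 n (T.erase p) U hr.1 hr.2
      rw [hw, hsd] at e
      simp only [hA]
      calc (∏ q ∈ (T ∩ U).erase p, (X (Sum.inr q) : P) ^ 2) * X (Sum.inl p) *
            (X (Sum.inl r) * ∏ i ∈ ((T.erase p \ U) ∪ (U \ T.erase p)).erase r, X (Sum.inr i))
          = X (Sum.inl p) * X (Sum.inl r) *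
            ((∏ q ∈ (T ∩ U).erase p, (X (Sum.inr q) : P) ^ 2) *
              ∏ i ∈ ((T.erase p \ U) ∪ (U \ T.erase p)).erase r, X (Sum.inr i)) := by ring
        _ = X (Sum.inl p) * X (Sum.inl r) *
            ((∏ i ∈ T.erase p, X (Sum.inr i)) * ∏ i ∈ U.erase r, X (Sum.inr i)) := by rw [e]
        _ = (X (Sum.inl p) * ∏ i ∈ T.erase p, X (Sum.inr i)) *
            (X (Sum.inl r) * ∏ i ∈ U.erase r, X (Sum.inr i)) := by ring
    · rw [Finset.mul_sum]
      apply Finset.sum_congr rfl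
      intro r hr
      rw [Finset.mem_sdiff] at hr
      have e := key3 n (T.erase p) U hr.1 hr.2
      rw [hw, hsd] at e
      simp only [hF]
      calc (∏ q ∈ (T ∩ U).erase p, (X (Sum.inr q) : P) ^ 2) * X (Sum.inl p) *
            (X (Sum.inl r) * ∏ i ∈ ((T.erase p \ U) ∪ (U \ T.erase p)).erase r, X (Sum.inr i))
          = X (Sum.inl p) * X (Sum.inl r) *
            ((∏ q ∈ (T ∩ U).erase p, (X (Sum.inr q) : P) ^ 2) *
              ∏ i ∈ ((T.erase p \ U) ∪ (U \ T.erase p)).erase r, X (Sum.inr i)) := by ring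
        _ = X (Sum.inl p) * X (Sum.inl r) *
            ((∏ i ∈ (T.erase p).erase r, X (Sum.inr i)) * ∏ i ∈ U, X (Sum.inr i)) := by rw [e]
        _ = X (Sum.inl p) * X (Sum.inl r) *
            (∏ i ∈ (T.erase p).erase r, X (Sum.inr i)) * ∏ i ∈ U, X (Sum.inr i) := by ring
  rw [Finset.sum_congr rfl hLHS, Finset.sum_congr rfl hRHS,
    Finset.sum_add_distrib, Finset.sum_add_distrib]
  congr 1
  rw [← sub_eq_zero, CharTwo.sub_eq_add, ← Finset.sum_add_distrib]
  rw [← main0]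
  apply Finset.sum_congr rfl
  intro p hp
  rw [Finset.inter_comm, add_comm,
    ← Finset.sum_union (Finset.disjoint_sdiff_inter (T.erase p) U),
    Finset.sdiff_union_inter]
end

section
/- Let F ⊆ C be the A-submodule generated by all v_T with |T| ≥ 1, and E ⊆ B = ker(s) the A-submodule generated by all s(v_T) with |T| ≥ 2. Then E ⊆ F, F ∩ A = 0, and B = A ⊕ E as A-modules. -/
open MvPolynomial

namespace Stmt10

variable {n : ℕ}

abbrev Cp (n : ℕ) := MvPolynomial (Fin n ⊕ Fin n) (ZMod 2)

lemma zmod2_cast (m : ℕ) : (m : ZMod 2) = if Odd m then 1 else 0 := by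
  rcases Nat.even_or_odd m with h | h
  · obtain ⟨k, rfl⟩ := h
    rw [if_neg (by rw [Nat.not_odd_iff_even]; exact ⟨k, rfl⟩)]
    push_cast
    exact CharTwo.add_self_eq_zero _
  · obtain ⟨k, rfl⟩ := h
    rw [if_pos ⟨k, rfl⟩]
    push_cast
    rw [show ((2:ZMod 2)) = 0 by decide]
    ring

lemma zmod2_cases (c : ZMod 2) : c = 0 ∨ c = 1 := by revert c; decide

lemma char2 (x y : Cp n) : x + (x + y) + y = 0 := by
  have h1 : x + (x + y) + y = (x + x) + (y + y) := by ring
  rw [h1, CharTwo.add_self_eq_zero, CharTwo.add_self_eq_zero, add_zero]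

/-! ### the derivation on monomials -/

lemma sDer_monomial (d : (Fin n ⊕ Fin n) →₀ ℕ) :
    sDer n (monomial d 1) =
      ∑ i ∈ Finset.univ.filter (fun i : Fin n => Odd (d (Sum.inr i))),
        monomial (d - Finsupp.single (Sum.inr i) 1 + Finsupp.single (Sum.inl i) 1) 1 := by
  rw [sDer, mkDerivation_monomial, one_smul, Finsupp.sum]
  rw [Finset.sum_subset (Finset.subset_univ d.support)
    (by
      intro x _ hx
      rw [Finsupp.notMem_support_iff.mp hx]
      simp)]
  rw [Fintype.sum_sum_type]
  simp only [Sum.elim_inl, Sum.elim_inr, smul_zero, Finset.sum_const_zero, zero_add]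
  rw [Finset.sum_filter]
  refine Finset.sum_congr rfl fun i _ => ?_
  rw [zmod2_cast]
  split_ifs with h
  · rw [smul_eq_mul, show (X (Sum.inl i) : Cp n)
        = monomial (Finsupp.single (Sum.inl i) 1) 1 from rfl, monomial_mul, mul_one]
  · simp

lemma sDer_X_inl (i : Fin n) : sDer n (X (Sum.inl i)) = 0 := by
  rw [sDer, mkDerivation_X]; rfl

lemma sDer_X_inr (i : Fin n) : sDer n (X (Sum.inr i)) = X (Sum.inl i) := by
  rw [sDer, mkDerivation_X]; rfl

lemma sDer_Asub {a : Cp n} (ha : a ∈ Asub n) : sDer n a = 0 := by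
  induction ha using Algebra.adjoin_induction with
  | mem x hx =>
    rcases hx with ⟨i, rfl⟩ | ⟨i, rfl⟩
    · exact sDer_X_inl i
    · show sDer n (X (Sum.inr i) ^ 2) = 0
      rw [pow_two, Derivation.leibniz, sDer_X_inr]
      exact CharTwo.add_self_eq_zero _
  | algebraMap r => exact Derivation.map_algebraMap _ _
  | add x y hx hy ihx ihy => rw [map_add, ihx, ihy, add_zero]
  | mul x y hx hy ihx ihy => rw [Derivation.leibniz, ihx, ihy, smul_zero, smul_zero, add_zero]

lemma sDer_mul_Asub {a : Cp n} (ha : a ∈ Asub n) (x : Cp n) :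
    sDer n (a * x) = a * sDer n x := by
  rw [Derivation.leibniz, sDer_Asub ha, smul_eq_mul, smul_eq_mul, mul_zero, add_zero]

lemma sDer_sDer (p : Cp n) : sDer n (sDer n p) = 0 := by
  let D : Derivation (ZMod 2) (Cp n) (Cp n) :=
    { toLinearMap := (sDer n).toLinearMap ∘ₗ (sDer n).toLinearMap
      map_one_eq_zero' := by simp
      leibniz' := by
        intro a b
        simp only [LinearMap.comp_apply, Derivation.coeFn_coe, smul_eq_mul]
        rw [Derivation.leibniz, smul_eq_mul, smul_eq_mul, map_add,
          Derivation.leibniz, Derivation.leibniz, smul_eq_mul, smul_eq_mul, smul_eq_mul,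
          smul_eq_mul]
        have h2 : sDer n a * sDer n b + sDer n b * sDer n a = 0 := by
          rw [mul_comm]; exact CharTwo.add_self_eq_zero _
        ring_nf
        ring_nf at h2
        rw [show (2:Cp n) = 0 by
          rw [show (2:Cp n) = 1 + 1 by norm_num]
          exact CharTwo.add_self_eq_zero 1]
        ring }
  have hD : D = 0 := by
    apply derivation_ext
    intro i
    show sDer n (sDer n (X i)) = 0
    rcases i with i | i
    · rw [sDer_X_inl, map_zero]
    · rw [sDer_X_inr, sDer_X_inl]
  show D p = 0
  rw [hD]; rfl

/-! ### products of the `v_i` -/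

lemma prod_X_inr (T : Finset (Fin n)) :
    (∏ i ∈ T, X (Sum.inr i) : Cp n) =
      monomial (∑ i ∈ T, Finsupp.single (Sum.inr i) 1) 1 := by
  induction T using Finset.induction_on with
  | empty => simp
  | @insert a s h ih =>
    rw [Finset.prod_insert h, Finset.sum_insert h, ih,
      show (X (Sum.inr a) : Cp n) = monomial (Finsupp.single (Sum.inr a) 1) 1 from rfl,
      monomial_mul, one_mul]

lemma sum_single_inl (T : Finset (Fin n)) (j : Fin n) :
    (∑ i ∈ T, Finsupp.single (α := Fin n ⊕ Fin n) (Sum.inr i) (1:ℕ)) (Sum.inl j) = 0 := by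
  rw [Finset.sum_apply']
  exact Finset.sum_eq_zero fun i _ => by simp [Finsupp.single_apply]

lemma sum_single_inr (T : Finset (Fin n)) (j : Fin n) :
    (∑ i ∈ T, Finsupp.single (α := Fin n ⊕ Fin n) (Sum.inr i) (1:ℕ)) (Sum.inr j)
      = if j ∈ T then 1 else 0 := by
  classical
  rw [Finset.sum_apply']
  simp [Finsupp.single_apply, Finset.sum_ite_eq]

/-! ### membership of even monomials in `Asub` -/

lemma monomial_mem_Asub (d : (Fin n ⊕ Fin n) →₀ ℕ) (c : ZMod 2)
    (hd : ∀ i, Even (d (Sum.inr i))) : (monomial d c) ∈ Asub n := by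
  rw [monomial_eq]
  refine Subalgebra.mul_mem _ ?_ ?_
  · rw [show (C c : Cp n) = algebraMap (ZMod 2) _ c from rfl]
    exact Subalgebra.algebraMap_mem _ _
  · rw [Finsupp.prod]
    refine Subalgebra.prod_mem _ fun j _ => ?_
    rcases j with i | i
    · exact Subalgebra.pow_mem _
        (Algebra.subset_adjoin (Set.mem_union_left _ (Set.mem_range_self i))) _
    · obtain ⟨k, hk⟩ := hd i
      rw [show d (Sum.inr i) = 2 * k by omega, pow_mul]
      exact Subalgebra.pow_mem _
        (Algebra.subset_adjoin (Set.mem_union_right _ (Set.mem_range_self i))) _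

lemma Asub_coeff_even {a : Cp n} (ha : a ∈ Asub n)
    (d : (Fin n ⊕ Fin n) →₀ ℕ) (hd : ¬ ∀ i, Even (d (Sum.inr i))) : coeff d a = 0 := by
  revert d
  induction ha using Algebra.adjoin_induction with
  | mem x hx =>
    intro d hd
    rcases hx with ⟨i, rfl⟩ | ⟨i, rfl⟩
    · show coeff d (X (Sum.inl i)) = 0
      rw [show (X (Sum.inl i) : Cp n) = monomial (Finsupp.single (Sum.inl i) 1) 1 from rfl,
        coeff_monomial]
      rw [if_neg]
      rintro rfl
      exact hd (fun j => by simp [Finsupp.single_apply])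
    · show coeff d (X (Sum.inr i) ^ 2) = 0
      rw [X_pow_eq_monomial, coeff_monomial]
      rw [if_neg]
      rintro rfl
      refine hd (fun j => ?_)
      rw [Finsupp.single_apply]
      split_ifs <;> simp
  | algebraMap r =>
    intro d hd
    rw [show (algebraMap (ZMod 2) (Cp n)) r = C r from rfl, coeff_C, if_neg]
    rintro rfl
    exact hd (fun j => by simp)
  | add x y hx hy ihx ihy => intro d hd; rw [coeff_add, ihx d hd, ihy d hd, add_zero]
  | mul x y hx hy ihx ihy =>
    intro d hd
    rw [coeff_mul]
    refine Finset.sum_eq_zero fun p hp => ?_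
    rw [Finset.HasAntidiagonal.mem_antidiagonal] at hp
    by_cases h1 : ∀ i, Even (p.1 (Sum.inr i))
    · have h2 : ¬ ∀ i, Even (p.2 (Sum.inr i)) := by
        intro h2
        refine hd fun i => ?_
        have h3 := (h1 i).add (h2 i)
        rwa [show p.1 (Sum.inr i) + p.2 (Sum.inr i) = d (Sum.inr i) by rw [← hp]; simp] at h3
      rw [ihy p.2 h2, mul_zero]
    · rw [ihx p.1 h1, zero_mul]

/-! ### the submodules -/

noncomputable def Fs (n : ℕ) : Submodule (Asub n) (Cp n) := Submodule.span (Asub n)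
  {x | ∃ T : Finset (Fin n), 1 ≤ T.card ∧ x = ∏ i ∈ T, X (Sum.inr i)}

noncomputable def Es (n : ℕ) : Submodule (Asub n) (Cp n) := Submodule.span (Asub n)
  {x | ∃ T : Finset (Fin n), 2 ≤ T.card ∧ x = sDer n (∏ i ∈ T, X (Sum.inr i))}

noncomputable def A1s (n : ℕ) : Submodule (Asub n) (Cp n) := Submodule.span (Asub n) {(1 : Cp n)}

lemma mem_A1s {x : Cp n} (hx : x ∈ Asub n) : x ∈ A1s n := by
  have h1 : (⟨x, hx⟩ : Asub n) • (1 : Cp n) = x := by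
    rw [Subalgebra.smul_def]
    exact mul_one x
  rw [← h1]
  exact Submodule.smul_mem _ _ (Submodule.mem_span_singleton_self 1)

lemma A1s_sub {x : Cp n} (hx : x ∈ A1s n) : x ∈ Asub n := by
  induction hx using Submodule.span_induction with
  | mem x hx => rw [Set.mem_singleton_iff.mp hx]; exact Subalgebra.one_mem _
  | zero => exact Subalgebra.zero_mem _
  | add x y hx hy ihx ihy => exact Subalgebra.add_mem _ ihx ihy
  | smul a x hx ih =>
    rw [show a • x = (↑a : Cp n) * x from Subalgebra.smul_def a x]
    exact Subalgebra.mul_mem _ a.2 ih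

/-! ### `E ≤ F` -/

lemma sDer_prod (T : Finset (Fin n)) :
    sDer n (∏ i ∈ T, X (Sum.inr i)) =
      ∑ j ∈ T, X (Sum.inl j) * ∏ i ∈ T.erase j, X (Sum.inr i) := by
  induction T using Finset.induction_on with
  | empty => simp
  | @insert a s h ih =>
    rw [Finset.prod_insert h, Derivation.leibniz, ih, sDer_X_inr, smul_eq_mul, smul_eq_mul,
      Finset.sum_insert h, Finset.erase_insert h, Finset.mul_sum]
    have hstep : ∀ j ∈ s, X (Sum.inr a) * (X (Sum.inl j) * ∏ i ∈ s.erase j, X (Sum.inr i))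
        = X (Sum.inl j) * ∏ i ∈ (insert a s).erase j, (X (Sum.inr i) : Cp n) := by
      intro j hj
      have hja : a ≠ j := fun hja => h (hja ▸ hj)
      rw [Finset.erase_insert_of_ne hja,
        Finset.prod_insert (fun hc => h (Finset.mem_of_mem_erase hc))]
      ring
    rw [Finset.sum_congr rfl hstep]
    ring

lemma Es_le_Fs : Es n ≤ Fs n := by
  rw [Es, Submodule.span_le]
  rintro x ⟨T, hT, rfl⟩
  rw [sDer_prod]
  refine Submodule.sum_mem _ fun j hj => ?_
  have hgen : (∏ i ∈ T.erase j, X (Sum.inr i) : Cp n) ∈ Fs n := by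
    refine Submodule.subset_span ⟨T.erase j, ?_, rfl⟩
    rw [Finset.card_erase_of_mem hj]
    omega
  have hXj : (X (Sum.inl j) : Cp n) ∈ Asub n :=
    Algebra.subset_adjoin (Set.mem_union_left _ (Set.mem_range_self j))
  have := Submodule.smul_mem (Fs n) (⟨X (Sum.inl j), hXj⟩ : Asub n) hgen
  rwa [Subalgebra.smul_def] at this

/-! ### `F ⊓ A1 = ⊥` -/

lemma Fs_coeff {x : Cp n} (hx : x ∈ Fs n) (d : (Fin n ⊕ Fin n) →₀ ℕ)
    (hd : ∀ i, Even (d (Sum.inr i))) : coeff d x = 0 := by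
  revert d
  induction hx using Submodule.span_induction with
  | mem x hx =>
    intro d hd
    obtain ⟨T, hT, rfl⟩ := hx
    rw [prod_X_inr, coeff_monomial, if_neg]
    rintro rfl
    obtain ⟨j, hj⟩ := Finset.card_pos.mp (by omega : 0 < T.card)
    have := hd j
    rw [sum_single_inr, if_pos hj] at this
    simp at this
  | zero => intro d hd; rw [coeff_zero]
  | add x y hx hy ihx ihy => intro d hd; rw [coeff_add, ihx d hd, ihy d hd, add_zero]
  | smul a x hx ih =>
    intro d hd
    rw [show a • x = (↑a : Cp n) * x from Subalgebra.smul_def a x, coeff_mul]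
    refine Finset.sum_eq_zero fun p hp => ?_
    rw [Finset.HasAntidiagonal.mem_antidiagonal] at hp
    by_cases h1 : ∀ i, Even (p.1 (Sum.inr i))
    · rw [ih p.2 (fun i => ?_), mul_zero]
      have e1 := h1 i
      have e2 := hd i
      have e3 : p.1 (Sum.inr i) + p.2 (Sum.inr i) = d (Sum.inr i) := by rw [← hp]; simp
      rw [Nat.even_iff] at *
      omega
    · rw [Asub_coeff_even a.2 p.1 h1, zero_mul]

lemma Fs_inf_A1s : Fs n ⊓ A1s n = ⊥ := by
  rw [eq_bot_iff]
  rintro x ⟨hxF, hxA⟩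
  have hA := A1s_sub hxA
  simp only [Submodule.mem_bot]
  apply MvPolynomial.ext
  intro d
  rw [coeff_zero]
  by_cases hd : ∀ i, Even (d (Sum.inr i))
  · exact Fs_coeff hxF d hd
  · exact Asub_coeff_even hA d hd


/-! ### Finsupp shifting lemmas -/

lemma shiftA (d : (Fin n ⊕ Fin n) →₀ ℕ) (a b : Fin n ⊕ Fin n) (hab : a ≠ b)
    (ha : 1 ≤ d a) :
    (d - Finsupp.single a 1 + Finsupp.single b 1) - Finsupp.single b 1 + Finsupp.single a 1
      = d := by
  ext x
  simp only [Finsupp.coe_add, Pi.add_apply, Finsupp.coe_tsub, Pi.sub_apply,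
    Finsupp.single_apply]
  split_ifs <;> subst_vars <;> first | omega | simp_all

lemma shiftB (d : (Fin n ⊕ Fin n) →₀ ℕ) (a b c e : Fin n ⊕ Fin n)
    (h1 : a ≠ b) (h2 : a ≠ c) (h3 : a ≠ e) (h4 : b ≠ c) (h5 : b ≠ e) (h6 : c ≠ e)
    (ha : 1 ≤ d a) (hc : 1 ≤ d c) :
    (d - Finsupp.single a 1 + Finsupp.single b 1) - Finsupp.single c 1 + Finsupp.single e 1
      = (d - Finsupp.single c 1 + Finsupp.single e 1) - Finsupp.single a 1
          + Finsupp.single b 1 := by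
  ext x
  simp only [Finsupp.coe_add, Pi.add_apply, Finsupp.coe_tsub, Pi.sub_apply,
    Finsupp.single_apply]
  split_ifs <;> subst_vars <;> first | omega | simp_all

/-! ### the image of `sDer` lands in `A1 ⊔ E` -/

def Todd (d : (Fin n ⊕ Fin n) →₀ ℕ) : Finset (Fin n) :=
  Finset.univ.filter (fun i => Odd (d (Sum.inr i)))

lemma monomial_factor (d : (Fin n ⊕ Fin n) →₀ ℕ) :
    (monomial d 1 : Cp n) =
      monomial (d - ∑ k ∈ Todd d, Finsupp.single (Sum.inr k) 1) 1 * ∏ i ∈ Todd d, X (Sum.inr i) := by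
  rw [prod_X_inr, monomial_mul, one_mul]
  have hexp : d - (∑ k ∈ Todd d, Finsupp.single (Sum.inr k) 1)
      + (∑ k ∈ Todd d, Finsupp.single (Sum.inr k) 1) = d := by
    ext a
    simp only [Finsupp.coe_add, Pi.add_apply, Finsupp.coe_tsub, Pi.sub_apply]
    rcases a with j | j
    · rw [sum_single_inl]
      omega
    · rw [sum_single_inr]
      by_cases hj : j ∈ Todd d
      · have : Odd (d (Sum.inr j)) := by simpa [Todd] using hj
        rw [Nat.odd_iff] at this
        rw [if_pos hj]
        omega
      · rw [if_neg hj]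
        omega
  rw [hexp]

lemma even_sub_Todd (d : (Fin n ⊕ Fin n) →₀ ℕ) (i : Fin n) :
    Even ((d - ∑ k ∈ Todd d, Finsupp.single (α := Fin n ⊕ Fin n) (Sum.inr k) (1:ℕ)) (Sum.inr i)) := by
  simp only [Finsupp.coe_tsub, Pi.sub_apply]
  rw [sum_single_inr]
  by_cases hj : i ∈ Todd d
  · have : Odd (d (Sum.inr i)) := by simpa [Todd] using hj
    rw [if_pos hj]
    rw [Nat.odd_iff] at this
    rw [Nat.even_iff]
    omega
  · have : ¬ Odd (d (Sum.inr i)) := by simpa [Todd] using hj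
    rw [Nat.not_odd_iff_even] at this
    rw [if_neg hj, Nat.sub_zero]
    exact this

lemma sDer_mem (p : Cp n) : sDer n p ∈ A1s n ⊔ Es n := by
  induction p using MvPolynomial.induction_on' with
  | add p q hp hq => rw [map_add]; exact Submodule.add_mem _ hp hq
  | monomial d c =>
    rcases zmod2_cases c with rfl | rfl
    · rw [show (monomial d (0 : ZMod 2) : Cp n) = 0 from (monomial d).map_zero, map_zero]
      exact Submodule.zero_mem _
    · rw [monomial_factor d,
        sDer_mul_Asub (monomial_mem_Asub _ 1 (even_sub_Todd d))]
      set a : Cp n := monomial (d - ∑ k ∈ Todd d, Finsupp.single (Sum.inr k) 1) 1 with ha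
      have haA : a ∈ Asub n := monomial_mem_Asub _ 1 (even_sub_Todd d)
      rcases Nat.lt_or_ge (Todd d).card 2 with hc | hc
      · rcases Nat.lt_or_ge (Todd d).card 1 with hc0 | hc1
        · have : Todd d = ∅ := Finset.card_eq_zero.mp (by omega)
          rw [this, Finset.prod_empty, Derivation.map_one_eq_zero, mul_zero]
          exact Submodule.zero_mem _
        · obtain ⟨j, hj⟩ := Finset.card_eq_one.mp (by omega : (Todd d).card = 1)
          rw [hj, Finset.prod_singleton, sDer_X_inr]
          exact Submodule.mem_sup_left (mem_A1s (Subalgebra.mul_mem _ haA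
            (Algebra.subset_adjoin (Set.mem_union_left _ (Set.mem_range_self j)))))
      · have hgen : sDer n (∏ i ∈ Todd d, X (Sum.inr i)) ∈ Es n :=
          Submodule.subset_span ⟨Todd d, hc, rfl⟩
        have := Submodule.smul_mem (Es n) (⟨a, haA⟩ : Asub n) hgen
        rw [Subalgebra.smul_def] at this
        exact Submodule.mem_sup_right this

/-! ### `A1 ⊔ E ≤ ker s` -/

lemma Es_ker {e : Cp n} (he : e ∈ Es n) : sDer n e = 0 := by
  induction he using Submodule.span_induction with
  | mem x hx => obtain ⟨T, hT, rfl⟩ := hx; exact sDer_sDer _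
  | zero => exact map_zero _
  | add x y hx hy ihx ihy => rw [map_add, ihx, ihy, add_zero]
  | smul b x hx ih =>
    rw [show b • x = (↑b : Cp n) * x from Subalgebra.smul_def b x, sDer_mul_Asub b.2, ih, mul_zero]

lemma sup_ker {c : Cp n} (hc : c ∈ A1s n ⊔ Es n) : sDer n c = 0 := by
  obtain ⟨a, ha, e, he, rfl⟩ := Submodule.mem_sup.mp hc
  rw [map_add, sDer_Asub (A1s_sub ha), zero_add, Es_ker he]

/-! ### the contracting homotopy -/

def badset (d : (Fin n ⊕ Fin n) →₀ ℕ) : Finset (Fin n) :=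
  Finset.univ.filter (fun i => d (Sum.inl i) ≠ 0 ∨ Odd (d (Sum.inr i)))

lemma mem_badset {d : (Fin n ⊕ Fin n) →₀ ℕ} {i : Fin n} :
    i ∈ badset d ↔ d (Sum.inl i) ≠ 0 ∨ Odd (d (Sum.inr i)) := by
  simp [badset]

noncomputable def hmon (n : ℕ) (d : (Fin n ⊕ Fin n) →₀ ℕ) : Cp n :=
  if hne : (badset d).Nonempty then
    if Odd (d (Sum.inr ((badset d).min' hne))) then 0
    else monomial (d - Finsupp.single (Sum.inl ((badset d).min' hne)) 1
        + Finsupp.single (Sum.inr ((badset d).min' hne)) 1) 1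
  else 0

lemma hmon_eq_of (d : (Fin n ⊕ Fin n) →₀ ℕ) (m : Fin n) (hm : m ∈ badset d)
    (hmin : ∀ j ∈ badset d, m ≤ j) :
    hmon n d = if Odd (d (Sum.inr m)) then 0
      else monomial (d - Finsupp.single (Sum.inl m) 1 + Finsupp.single (Sum.inr m) 1) 1 := by
  have hne : (badset d).Nonempty := ⟨m, hm⟩
  have h1 : (badset d).min' hne = m :=
    le_antisymm (Finset.min'_le _ _ hm) (Finset.le_min' _ _ _ hmin)
  rw [hmon, dif_pos hne, h1]

noncomputable def hmap (n : ℕ) : Cp n →ₗ[ZMod 2] Cp n :=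
  (basisMonomials (Fin n ⊕ Fin n) (ZMod 2)).constr (ZMod 2) (hmon n)

lemma hmap_monomial (d : (Fin n ⊕ Fin n) →₀ ℕ) : hmap n (monomial d 1) = hmon n d := by
  rw [hmap, show (monomial d 1 : Cp n) = basisMonomials (Fin n ⊕ Fin n) (ZMod 2) d by
    rw [coe_basisMonomials], Module.Basis.constr_basis]

lemma key_mon (d : (Fin n ⊕ Fin n) →₀ ℕ) :
    monomial d 1 + sDer n (hmon n d) + hmap n (sDer n (monomial d 1)) ∈ Asub n := by
  classical
  by_cases hne : (badset d).Nonempty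
  case neg =>
    have hb : ∀ i : Fin n, d (Sum.inl i) = 0 ∧ ¬ Odd (d (Sum.inr i)) := by
      intro i
      have h0 := Finset.not_nonempty_iff_eq_empty.mp hne
      have : i ∉ badset d := by rw [h0]; exact Finset.notMem_empty i
      rw [mem_badset] at this
      push_neg at this
      exact this
    have h1 : hmon n d = 0 := by rw [hmon, dif_neg hne]
    have h2 : sDer n (monomial d 1) = 0 := by
      rw [sDer_monomial]
      have : Finset.univ.filter (fun i : Fin n => Odd (d (Sum.inr i))) = ∅ := by
        ext i; simp [(hb i).2]
      rw [this, Finset.sum_empty]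
    rw [h1, map_zero, h2, map_zero, add_zero, add_zero]
    exact monomial_mem_Asub _ _ (fun i => Nat.not_odd_iff_even.mp (hb i).2)
  case pos =>
    set m := (badset d).min' hne with hmdef
    have hmmem : m ∈ badset d := Finset.min'_mem _ _
    have hmle : ∀ j ∈ badset d, m ≤ j := fun j hj => Finset.min'_le _ _ hj
    have hlt : ∀ j, j < m → (d (Sum.inl j) = 0 ∧ ¬ Odd (d (Sum.inr j))) := by
      intro j hj
      by_contra hc
      have hjb : j ∈ badset d := by rw [mem_badset]; tauto
      exact absurd (hmle j hjb) (not_le.mpr hj)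
    by_cases hoddm : Odd (d (Sum.inr m))
    · -- case B : the minimal bad index has odd v-exponent
      have h1 : hmon n d = 0 := by rw [hmon_eq_of d m hmmem hmle, if_pos hoddm]
      have h3 : hmap n (sDer n (monomial d 1)) = monomial d 1 := by
        rw [sDer_monomial, map_sum]
        rw [Finset.sum_congr rfl (fun i _ => hmap_monomial _)]
        rw [Finset.sum_eq_single m ?_ ?_]
        · -- hmon of d_m is monomial d 1
          set dm := d - Finsupp.single (Sum.inr m) 1 + Finsupp.single (Sum.inl m) 1 with hdm
          have hodd1 : d (Sum.inr m) % 2 = 1 := Nat.odd_iff.mp hoddm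
          have cInl : dm (Sum.inl m) = d (Sum.inl m) + 1 := by
            simp [hdm, Finsupp.single_apply]
          have cInr : dm (Sum.inr m) = d (Sum.inr m) - 1 := by
            simp [hdm, Finsupp.single_apply]
          have cmm : m ∈ badset dm := by rw [mem_badset, cInl]; left; omega
          have cle : ∀ j ∈ badset dm, m ≤ j := by
            intro j hj
            by_contra hcon
            push_neg at hcon
            obtain ⟨hz, ho⟩ := hlt j hcon
            have cjl : dm (Sum.inl j) = d (Sum.inl j) := by
              simp [hdm, Finsupp.single_apply, (hcon.ne : j ≠ m), Ne.symm (hcon.ne : j ≠ m)]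
            have cjr : dm (Sum.inr j) = d (Sum.inr j) := by
              simp [hdm, Finsupp.single_apply, (hcon.ne : j ≠ m), Ne.symm (hcon.ne : j ≠ m)]
            rw [mem_badset, cjl, cjr] at hj
            tauto
          rw [hmon_eq_of dm m cmm cle, if_neg (by rw [cInr, Nat.not_odd_iff_even, Nat.even_iff]; omega)]
          rw [hdm, shiftA d (Sum.inr m) (Sum.inl m) (by simp) (by omega)]
        · -- other indices give 0
          intro i hifil hine
          rw [Finset.mem_filter] at hifil
          have hoddi : Odd (d (Sum.inr i)) := hifil.2
          have hmi : m < i := lt_of_le_of_ne (hmle i (mem_badset.mpr (Or.inr hoddi)))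
            (Ne.symm hine)
          set di := d - Finsupp.single (Sum.inr i) 1 + Finsupp.single (Sum.inl i) 1 with hdi
          have cInr : di (Sum.inr m) = d (Sum.inr m) := by
            simp [hdi, Finsupp.single_apply, (hmi.ne : m ≠ i), Ne.symm (hmi.ne : m ≠ i)]
          have cmm : m ∈ badset di := by rw [mem_badset, cInr]; right; exact hoddm
          have cle : ∀ j ∈ badset di, m ≤ j := by
            intro j hj
            by_contra hcon
            push_neg at hcon
            obtain ⟨hz, ho⟩ := hlt j hcon
            have hji : j ≠ i := by omega
            have cjl : di (Sum.inl j) = d (Sum.inl j) := by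
              simp [hdi, Finsupp.single_apply, hji, Ne.symm hji]
            have cjr : di (Sum.inr j) = d (Sum.inr j) := by
              simp [hdi, Finsupp.single_apply, hji, Ne.symm hji]
            rw [mem_badset, cjl, cjr] at hj
            tauto
          rw [hmon_eq_of di m cmm cle, if_pos (by rw [cInr]; exact hoddm)]
        · intro hm
          exact absurd (Finset.mem_filter.mpr ⟨Finset.mem_univ m, hoddm⟩) hm
      rw [h1, map_zero, add_zero, h3, CharTwo.add_self_eq_zero]
      exact Subalgebra.zero_mem _
    · -- case C : minimal bad index has u-exponent ≥ 1
      have hul : d (Sum.inl m) ≠ 0 := by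
        rw [mem_badset] at hmmem; tauto
      set e := d - Finsupp.single (Sum.inl m) 1 + Finsupp.single (Sum.inr m) 1 with he
      have h1 : hmon n d = monomial e 1 := by
        rw [hmon_eq_of d m hmmem hmle, if_neg hoddm]
      have heInr : ∀ i, e (Sum.inr i) = d (Sum.inr i) + (if i = m then 1 else 0) := by
        intro i
        simp only [he, Finsupp.coe_add, Pi.add_apply, Finsupp.coe_tsub, Pi.sub_apply,
          Finsupp.single_apply]
        split_ifs <;> simp_all <;> omega
      have hfil : Finset.univ.filter (fun i : Fin n => Odd (e (Sum.inr i)))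
          = insert m (Finset.univ.filter (fun i : Fin n => Odd (d (Sum.inr i)))) := by
        ext i
        simp only [Finset.mem_filter, Finset.mem_univ, true_and, Finset.mem_insert]
        rw [heInr i]
        have hm2 : d (Sum.inr m) % 2 = 0 := by
          rw [← Nat.even_iff, ← Nat.not_odd_iff_even]; exact hoddm
        by_cases him : i = m
        · subst him
          rw [if_pos rfl, Nat.odd_iff, Nat.odd_iff]
          constructor
          · intro _; exact Or.inl rfl
          · intro _; omega
        · simp only [if_neg him, add_zero]
          tauto
      have hmnot : m ∉ Finset.univ.filter (fun i : Fin n => Odd (d (Sum.inr i))) := by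
        simp [hoddm]
      have h2 : sDer n (hmon n d) = monomial d 1 +
          ∑ i ∈ Finset.univ.filter (fun i : Fin n => Odd (d (Sum.inr i))),
            monomial (e - Finsupp.single (Sum.inr i) 1 + Finsupp.single (Sum.inl i) 1) 1 := by
        rw [h1, sDer_monomial, hfil, Finset.sum_insert hmnot]
        congr 1
        rw [he, shiftA d (Sum.inl m) (Sum.inr m) (by simp) (by omega)]
      have h3 : hmap n (sDer n (monomial d 1)) =
          ∑ i ∈ Finset.univ.filter (fun i : Fin n => Odd (d (Sum.inr i))),
            monomial (e - Finsupp.single (Sum.inr i) 1 + Finsupp.single (Sum.inl i) 1) 1 := by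
        rw [sDer_monomial, map_sum]
        rw [Finset.sum_congr rfl (fun i _ => hmap_monomial _)]
        refine Finset.sum_congr rfl fun i hifil => ?_
        rw [Finset.mem_filter] at hifil
        have hoddi : Odd (d (Sum.inr i)) := hifil.2
        have hodd1 : d (Sum.inr i) % 2 = 1 := Nat.odd_iff.mp hoddi
        have hmi : m < i := lt_of_le_of_ne (hmle i (mem_badset.mpr (Or.inr hoddi)))
          (by rintro rfl; exact hoddm hoddi)
        set di := d - Finsupp.single (Sum.inr i) 1 + Finsupp.single (Sum.inl i) 1 with hdi
        have cInl : di (Sum.inl m) = d (Sum.inl m) := by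
          simp [hdi, Finsupp.single_apply, (hmi.ne : m ≠ i), Ne.symm (hmi.ne : m ≠ i)]
        have cInr : di (Sum.inr m) = d (Sum.inr m) := by
          simp [hdi, Finsupp.single_apply, (hmi.ne : m ≠ i), Ne.symm (hmi.ne : m ≠ i)]
        have cmm : m ∈ badset di := by rw [mem_badset, cInl]; left; exact hul
        have cle : ∀ j ∈ badset di, m ≤ j := by
          intro j hj
          by_contra hcon
          push_neg at hcon
          obtain ⟨hz, ho⟩ := hlt j hcon
          have hji : j ≠ i := by omega
          have cjl : di (Sum.inl j) = d (Sum.inl j) := by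
            simp [hdi, Finsupp.single_apply, hji, Ne.symm hji]
          have cjr : di (Sum.inr j) = d (Sum.inr j) := by
            simp [hdi, Finsupp.single_apply, hji, Ne.symm hji]
          rw [mem_badset, cjl, cjr] at hj
          tauto
        rw [hmon_eq_of di m cmm cle, if_neg (by rw [cInr]; exact hoddm)]
        rw [hdi, he, shiftB d (Sum.inr i) (Sum.inl i) (Sum.inl m) (Sum.inr m)
          (by simp) (by simp) (by simp [hmi.ne']) (by simp [hmi.ne']) (by simp) (by simp)
          (by omega) (by omega)]
      rw [h2, h3, char2]
      exact Subalgebra.zero_mem _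

lemma key_all (p : Cp n) : p + sDer n (hmap n p) + hmap n (sDer n p) ∈ Asub n := by
  induction p using MvPolynomial.induction_on' with
  | monomial d c =>
    rcases zmod2_cases c with rfl | rfl
    · rw [show (monomial d (0 : ZMod 2) : Cp n) = 0 from (monomial d).map_zero]
      rw [map_zero, map_zero, map_zero, add_zero, add_zero]
      exact Subalgebra.zero_mem _
    · rw [hmap_monomial]
      exact key_mon d
  | add p q hp hq =>
    have hsum := Subalgebra.add_mem _ hp hq
    have : p + q + sDer n (hmap n (p + q)) + hmap n (sDer n (p + q)) =
        (p + sDer n (hmap n p) + hmap n (sDer n p)) +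
        (q + sDer n (hmap n q) + hmap n (sDer n q)) := by
      rw [map_add, map_add, map_add, map_add]
      ring
    rw [this]
    exact hsum

lemma ker_sup {c : Cp n} (hc : sDer n c = 0) : c ∈ A1s n ⊔ Es n := by
  have h1 := key_all (n := n) c
  rw [hc, map_zero, add_zero] at h1
  have h2 : c = (c + sDer n (hmap n c)) + sDer n (hmap n c) := by
    rw [add_assoc, CharTwo.add_self_eq_zero, add_zero]
  rw [h2]
  exact Submodule.add_mem _ (Submodule.mem_sup_left (mem_A1s h1)) (sDer_mem _)

end Stmt10

open Stmt10 in
/-- With `F` the `A`-submodule of `C` generated by the `v_T` with `|T| ≥ 1`,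
`E` the `A`-submodule generated by the `s(v_T)` with `|T| ≥ 2`, and `A·1` the
copy of `A` in `C`:  `E ⊆ F`, `F ∩ A = 0`, and `B = ker(s) = A ⊕ E`. -/
theorem stmt10 (n : ℕ) :
    let C := MvPolynomial (Fin n ⊕ Fin n) (ZMod 2)
    let F : Submodule (Asub n) C := Submodule.span (Asub n)
      {x | ∃ T : Finset (Fin n), 1 ≤ T.card ∧ x = ∏ i ∈ T, X (Sum.inr i)}
    let E : Submodule (Asub n) C := Submodule.span (Asub n)
      {x | ∃ T : Finset (Fin n), 2 ≤ T.card ∧ x = sDer n (∏ i ∈ T, X (Sum.inr i))}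
    let A1 : Submodule (Asub n) C := Submodule.span (Asub n) {(1 : C)}
    E ≤ F ∧ F ⊓ A1 = ⊥ ∧ (∀ c : C, sDer n c = 0 ↔ c ∈ A1 ⊔ E) ∧ A1 ⊓ E = ⊥ := by
  intro C F E A1
  refine ⟨Es_le_Fs, Fs_inf_A1s, fun c => ⟨ker_sup, sup_ker⟩, ?_⟩
  rw [eq_bot_iff]
  intro x hx
  have hxF : x ∈ Fs n ⊓ A1s n := ⟨Es_le_Fs hx.2, hx.1⟩
  rw [Fs_inf_A1s] at hxF
  exact hxF
end

section
/- If f ∈ k[x_1,…,x_n] over k = ℤ/2 satisfies f(v_1^2,…,v_n^2) ∈ im(s) in C = k[u_1,…,u_n,v_1,…,v_n], where s is the derivation with s(u_i)=0, s(v_i)=u_i, then f = 0. -/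
open MvPolynomial

noncomputable def phi (n : ℕ) :
    MvPolynomial (Fin n ⊕ Fin n) (ZMod 2) →ₐ[ZMod 2] MvPolynomial (Fin n) (ZMod 2) :=
  aeval (Sum.elim (fun _ => 0) X)

lemma phi_sDer (n : ℕ) (x : MvPolynomial (Fin n ⊕ Fin n) (ZMod 2)) :
    phi n (sDer n x) = 0 := by
  induction x using MvPolynomial.induction_on with
  | C a => rw [← algebraMap_eq, Derivation.map_algebraMap, map_zero]
  | add p q hp hq => simp [hp, hq]
  | mul_X p i hp =>
    rw [Derivation.leibniz, smul_eq_mul, smul_eq_mul, map_add, map_mul, map_mul, hp,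
      mul_zero, add_zero]
    have : sDer n (X i) = Sum.elim (fun _ => 0) (fun j => X (Sum.inl j)) i :=
      mkDerivation_X _ _ _
    cases i with
    | inl j => simp [this]
    | inr j => simp [this, phi]

lemma coeff_expand2 (n : ℕ) (f : MvPolynomial (Fin n) (ZMod 2)) (d : Fin n →₀ ℕ) :
    coeff (2 • d) (expand 2 f) = coeff d f := by
  induction f using MvPolynomial.induction_on' with
  | monomial e r =>
    have he : expand 2 (monomial e r) = monomial (2 • e) r := by
      rw [expand_monomial, monomial_eq]
    rw [he, coeff_monomial, coeff_monomial]
    congr 1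
    simp only [eq_iff_iff]
    constructor
    · intro h'; ext i
      have := DFunLike.congr_fun h' i
      simpa using this
    · rintro rfl; rfl
  | add p q hp hq => simp [hp, hq]

/-- If `f ∈ k[x₁,…,xₙ]` satisfies `f(v₁²,…,vₙ²) ∈ im(s)`, then `f = 0`. -/
theorem stmt13 (n : ℕ) (f : MvPolynomial (Fin n) (ZMod 2))
    (h : ∃ x : MvPolynomial (Fin n ⊕ Fin n) (ZMod 2),
      sDer n x = aeval
        (fun i : Fin n => (X (Sum.inr i) : MvPolynomial (Fin n ⊕ Fin n) (ZMod 2)) ^ 2) f) :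
    f = 0 := by
  obtain ⟨x, hx⟩ := h
  have h1 : phi n (sDer n x) = expand 2 f := by
    rw [hx, ← AlgHom.comp_apply]
    have : (phi n).comp (aeval
        (fun i : Fin n => (X (Sum.inr i) : MvPolynomial (Fin n ⊕ Fin n) (ZMod 2)) ^ 2)) =
        expand 2 := by
      apply algHom_ext
      intro i
      simp [phi, expand]
    rw [this]
  rw [phi_sDer] at h1
  ext d
  rw [← coeff_expand2 n f d, ← h1]; simp
end

section
/- Let R = ℤ/2[λ, a_1,…,a_{2n−1}, b_4,…,b_{4n}, (d_T)_T] be the polynomial ring of Theorem on H*(BGO(2n)) and I the ideal generated by relations (1)–(5) of that theorem. Then the images of λ, b_4, …, b_{4n} in R/I are algebraically independent over ℤ/2; i.e., the composite ℤ/2[λ, b_4,…,b_{4n}] → R → R/I is injective. -/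
open MvPolynomial

set_option synthInstance.maxHeartbeats 1000000
set_option maxHeartbeats 1000000

/-- Index of the variables of `R = ℤ/2[λ, (a_{2i-1})ᵢ, (b_{4i})ᵢ, (d_T)_T]`:
`λ`, the `aᵢ := a_{2i-1}` (`1 ≤ i ≤ n`), the `bᵢ := b_{4i}` (`1 ≤ i ≤ n`), and
the `d_T` for `T ⊆ {1,…,n}`, `|T| ≥ 2`. -/
abbrev Idx18 (n : ℕ) := Unit ⊕ Fin n ⊕ Fin n ⊕ {T : Finset (Fin n) // 2 ≤ T.card}

noncomputable def lamV (n : ℕ) : MvPolynomial (Idx18 n) (ZMod 2) := X (Sum.inl ())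
noncomputable def aV (n : ℕ) (i : Fin n) : MvPolynomial (Idx18 n) (ZMod 2) :=
  X (Sum.inr (Sum.inl i))
noncomputable def bV (n : ℕ) (i : Fin n) : MvPolynomial (Idx18 n) (ZMod 2) :=
  X (Sum.inr (Sum.inr (Sum.inl i)))

/-- `d_S` for an arbitrary subset `S`, with the conventions `d_{{j}} = a_{2j-1}`
and `d_∅ = 0` (uniformly: `Σ_{j∈S} a_{2j-1}` when `|S| ≤ 1`). -/
noncomputable def dOf (n : ℕ) (S : Finset (Fin n)) : MvPolynomial (Idx18 n) (ZMod 2) :=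
  if h : 2 ≤ S.card then X (Sum.inr (Sum.inr (Sum.inr ⟨S, h⟩))) else ∑ j ∈ S, aV n j

/-- The ideal `I` generated by the relations (1)–(5) of the theorem on
`H^*(BGO(2n); ℤ/2)`. -/
noncomputable def I18 (n : ℕ) : Ideal (MvPolynomial (Idx18 n) (ZMod 2)) :=
  Ideal.span
    ({p | ∃ i : Fin n, p = lamV n * aV n i} ∪
     {p | ∃ T : Finset (Fin n), 2 ≤ T.card ∧ p = lamV n * dOf n T} ∪
     {p | ∃ T : Finset (Fin n), 3 ≤ T.card ∧
        p = ∑ i ∈ T, aV n i * dOf n (T.erase i)} ∪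
     {p | ∃ i j : Fin n, i ≠ j ∧
        p = (dOf n {i, j}) ^ 2 + (aV n i) ^ 2 * bV n j + (aV n j) ^ 2 * bV n i} ∪
     {p | ∃ T U : Finset (Fin n), 2 ≤ T.card ∧ 2 ≤ U.card ∧
        (T.card = 2 → U.card = 2 → T ≠ U) ∧
        p = dOf n T * dOf n U + ∑ q ∈ T,
          aV n q * (∏ r ∈ (T ∩ U).erase q, bV n r) * dOf n (symmDiff (T.erase q) U)})


noncomputable def g18 (n : ℕ) : Idx18 n → MvPolynomial (Option (Fin n)) (ZMod 2)
  | Sum.inl _ => X none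
  | Sum.inr (Sum.inl _) => 0
  | Sum.inr (Sum.inr (Sum.inl i)) => X (some i)
  | Sum.inr (Sum.inr (Sum.inr _)) => 0

lemma aeval_dOf (n : ℕ) (S : Finset (Fin n)) : bind₁ (g18 n) (dOf n S) = 0 := by
  unfold dOf
  split
  · simp [g18]
  · simp [aV, g18]

lemma aeval_aV (n : ℕ) (i : Fin n) : bind₁ (g18 n) (aV n i) = 0 := by
  simp [aV, g18]

lemma I18_le_ker (n : ℕ) (x : MvPolynomial (Idx18 n) (ZMod 2)) (hx : x ∈ I18 n) :
    aeval (g18 n) x = 0 := by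
  have h : I18 n ≤ RingHom.ker ((aeval (g18 n) :
      MvPolynomial (Idx18 n) (ZMod 2) →ₐ[ZMod 2]
        MvPolynomial (Option (Fin n)) (ZMod 2))).toRingHom := by
    rw [I18, Ideal.span_le]
    rintro p (((((⟨i, rfl⟩ | ⟨T, hT, rfl⟩) | ⟨T, hT, rfl⟩) | ⟨i, j, hij, rfl⟩) |
      ⟨T, U, hT, hU, hTU, rfl⟩)) <;>
      simp [SetLike.mem_coe, RingHom.mem_ker, aeval_dOf, aeval_aV]
  exact h hx

/-- The images of `λ, b₄, …, b_{4n}` in `R/I` are algebraically independent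
over `ℤ/2`. -/
theorem stmt18 (n : ℕ) :
    AlgebraicIndependent (ZMod 2)
      (fun i : Option (Fin n) =>
        Ideal.Quotient.mk (I18 n) (i.elim (lamV n) (bV n))) := by
  have key : AlgebraicIndependent (ZMod 2)
      ((Ideal.Quotient.liftₐ (I18 n) (aeval (g18 n)) (I18_le_ker n)) ∘
        (fun i : Option (Fin n) =>
          Ideal.Quotient.mk (I18 n) (i.elim (lamV n) (bV n)))) := by
    have : ((Ideal.Quotient.liftₐ (I18 n) (aeval (g18 n)) (I18_le_ker n)) ∘
        (fun i : Option (Fin n) =>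
          Ideal.Quotient.mk (I18 n) (i.elim (lamV n) (bV n)))) =
        (X : Option (Fin n) → MvPolynomial (Option (Fin n)) (ZMod 2)) := by
      funext i
      cases i <;> simp only [Function.comp_apply, Ideal.Quotient.liftₐ_apply, Ideal.Quotient.lift_mk, Option.elim] <;> simp [lamV, bV, g18]
    rw [this]
    exact MvPolynomial.algebraicIndependent_X _ _
  exact AlgebraicIndependent.of_comp _ key
end
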